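/- arXiv:1905.12427 — 8 statements merged into one kernel-verified Lean document; each statement's English description precedes it below -/
import Mathlib

section
/- Every countable discrete group G admits a proper length function, i.e. a function l : G → [0,∞) such that l(g⁻¹) = l(g) for all g ∈ G, l(gh) ≤ l(g) + l(h) for all g, h ∈ G, l(g) = 0 if and only if g is the identity element, and for every R > 0 the set {g ∈ G : l(g) ≤ R} is finite. -/
/-!
Enumerate `G` injectively by `f : G → ℕ` and give each element the weight
`w g = f g + f g⁻¹ + 1`, which is positive, invariant under inversion and has finite sublevel
sets. The length of `g` is the least total weight of a word in the letters of `G` whose product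
is `g`. Concatenating and inverting words gives subadditivity and symmetry; a word of total
weight at most `n` has at most `n` letters, each of weight at most `n`, so only finitely many
elements have length at most `n`.
-/

section Monoid

variable {G : Type*} [Monoid G] (w : G → ℕ)

noncomputable def weightedLength (g : G) : ℕ :=
  sInf {n | ∃ L : List G, L.prod = g ∧ (L.map w).sum = n}

theorem exists_prod_eq_and_sum_eq_weightedLength (g : G) :
    ∃ L : List G, L.prod = g ∧ (L.map w).sum = weightedLength w g :=
  Nat.sInf_mem (s := {n | ∃ L : List G, L.prod = g ∧ (L.map w).sum = n})
    ⟨w g, [g], by simp⟩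

theorem weightedLength_prod_le (L : List G) : weightedLength w L.prod ≤ (L.map w).sum :=
  Nat.sInf_le ⟨L, rfl, rfl⟩

theorem weightedLength_one : weightedLength w 1 = 0 :=
  Nat.le_zero.mp (weightedLength_prod_le w [])

theorem weightedLength_mul_le (g h : G) :
    weightedLength w (g * h) ≤ weightedLength w g + weightedLength w h := by
  obtain ⟨L₁, rfl, hL₁⟩ := exists_prod_eq_and_sum_eq_weightedLength w g
  obtain ⟨L₂, rfl, hL₂⟩ := exists_prod_eq_and_sum_eq_weightedLength w h
  calc weightedLength w (L₁.prod * L₂.prod)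
      = weightedLength w (L₁ ++ L₂).prod := by rw [List.prod_append]
    _ ≤ ((L₁ ++ L₂).map w).sum := weightedLength_prod_le w _
    _ = _ := by rw [List.map_append, List.sum_append, hL₁, hL₂]

theorem weightedLength_eq_zero_iff (hw : ∀ g, w g = 0 → g = 1) (g : G) :
    weightedLength w g = 0 ↔ g = 1 := by
  refine ⟨fun h => ?_, fun h => h ▸ weightedLength_one w⟩
  obtain ⟨L, rfl, hL⟩ := exists_prod_eq_and_sum_eq_weightedLength w g
  rw [h, List.sum_eq_zero_iff] at hL
  exact List.prod_eq_one fun x hx => hw x (hL _ (List.mem_map_of_mem hx))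

theorem finite_setOf_weightedLength_le (hpos : ∀ g, 0 < w g)
    (hfin : ∀ n, {g | w g ≤ n}.Finite) (n : ℕ) : {g | weightedLength w g ≤ n}.Finite := by
  set F := {g | w g ≤ n}
  have : Finite F := hfin n
  refine ((List.finite_length_le F n).image fun L => (L.map Subtype.val).prod).subset ?_
  intro g (hg : weightedLength w g ≤ n)
  obtain ⟨L, rfl, hL⟩ := exists_prod_eq_and_sum_eq_weightedLength w g
  have hcost : (L.map w).sum ≤ n := hL ▸ hg
  have hletters : ∀ x ∈ L, x ∈ F := fun x hx =>
    (List.le_sum_of_mem (List.mem_map_of_mem hx)).trans hcost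
  have hlength : L.length ≤ n := by
    rw [← List.length_map (f := w)]
    refine (List.length_le_sum_of_one_le _ fun k hk => ?_).trans hcost
    obtain ⟨x, -, rfl⟩ := List.mem_map.mp hk
    exact hpos x
  lift L to List F using hletters
  exact ⟨L, by simpa using hlength, rfl⟩

end Monoid

section Group

variable {G : Type*} [Group G] (w : G → ℕ)

theorem weightedLength_inv (hw : ∀ g, w g⁻¹ = w g) (g : G) :
    weightedLength w g⁻¹ = weightedLength w g := by
  suffices h : ∀ g : G, weightedLength w g⁻¹ ≤ weightedLength w g from
    le_antisymm (h g) (by simpa using h g⁻¹)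
  intro g
  obtain ⟨L, rfl, hL⟩ := exists_prod_eq_and_sum_eq_weightedLength w g
  calc weightedLength w L.prod⁻¹
      = weightedLength w (L.map (·⁻¹)).reverse.prod := by rw [List.prod_inv_reverse]
    _ ≤ ((L.map (·⁻¹)).reverse.map w).sum := weightedLength_prod_le w _
    _ = _ := by simp [List.map_reverse, Function.comp_def, hw, hL]

end Group

theorem exists_inv_invariant_pos_weight_of_countable (G : Type*) [InvolutiveInv G]
    [Countable G] :
    ∃ w : G → ℕ, (∀ g, w g⁻¹ = w g) ∧ (∀ g, 0 < w g) ∧ ∀ n, {g | w g ≤ n}.Finite := by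
  obtain ⟨f, hf⟩ := Countable.exists_injective_nat G
  refine ⟨fun g => f g + f g⁻¹ + 1, fun g => by simp [add_comm (f g)], fun g => by simp,
    fun n => (Set.finite_Iic n |>.preimage hf.injOn).subset fun g (hg : _ ≤ n) => ?_⟩
  simp only [Set.mem_preimage, Set.mem_Iic] at hg ⊢
  omega

/-- Every countable discrete group admits a proper length function. -/
theorem exists_proper_length_function (G : Type*) [Group G] [Countable G] :
    ∃ l : G → ℝ,
      (∀ g : G, 0 ≤ l g) ∧
      (∀ g : G, l g⁻¹ = l g) ∧
      (∀ g h : G, l (g * h) ≤ l g + l h) ∧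
      (∀ g : G, l g = 0 ↔ g = 1) ∧
      (∀ R : ℝ, 0 < R → {g : G | l g ≤ R}.Finite) := by
  obtain ⟨w, hinv, hpos, hfin⟩ := exists_inv_invariant_pos_weight_of_countable G
  refine ⟨fun g => weightedLength w g, fun g => Nat.cast_nonneg _, fun g => ?_,
    fun g h => ?_, fun g => ?_, fun R _ => ?_⟩ <;> dsimp only
  · rw [weightedLength_inv w hinv]
  · exact_mod_cast weightedLength_mul_le w g h
  · rw [Nat.cast_eq_zero]
    exact weightedLength_eq_zero_iff w (fun g hg => absurd hg (hpos g).ne') g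
  · exact (finite_setOf_weightedLength_le w hpos hfin ⌊R⌋₊).subset
      fun g hg => Nat.le_floor hg
end

section
/- For every n ≥ 1, the asymptotic dimension of ℤⁿ, equipped with the metric restricted from the Euclidean metric on ℝⁿ, is exactly n: ℤⁿ has asymptotic dimension at most n, and does not have asymptotic dimension at most n−1. -/
/-!
Upper bound at scale `r < t`: put `L = (n + 1)(2t + 1)` and, for `j = 0, …, n`, take the cubes
of the grid `Lℤⁿ + j(2t + 1)(1, …, 1)`, shrunk by `t` on every side. Cubes with the same `j` are
`2t` apart, so an `r`-ball meets at most one cube of each shift; and every point lies in some cube,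
because each of its `n` coordinates falls into a wall for at most one of the `n + 1` shifts.

Lower bound: given a cover at scale `n` by sets of diameter `< N`, label a lattice point `x` of
`[0, N]ⁿ` by `i + 1` if the member containing `x` reaches the hyperplane `uᵢ = N`, and by `0`
otherwise. This is a Sperner labelling, so some simplex of the Kuhn triangulation of the cube
carries all `n + 1` labels; its vertices then lie in `n + 1` distinct members, all meeting the ball
of radius `n` about its first vertex. Sperner's lemma is the parity argument: call a facet carrying
every label but the last a door; interior doors pair up across adjacent simplices, and the boundary
doors are the fully labelled simplices of the face `x m = 0`, so induction on the dimension applies.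
-/

/-- A space with distance function `d` has asymptotic dimension at most `n`:
for every `r > 0` there is a uniformly bounded cover such that every `r`-ball
meets at most `n + 1` members of the cover. -/
def AsdimLE {X : Type*} (d : X → X → ℝ) (n : ℕ) : Prop :=
  ∀ r : ℝ, 0 < r → ∃ 𝒰 : Set (Set X),
    (∀ x : X, ∃ U ∈ 𝒰, x ∈ U) ∧
    (∃ B : ℝ, ∀ U ∈ 𝒰, ∀ x ∈ U, ∀ y ∈ U, d x y ≤ B) ∧
    (∀ x : X, {U | U ∈ 𝒰 ∧ ∃ y ∈ U, d x y ≤ r}.Finite ∧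
      {U | U ∈ 𝒰 ∧ ∃ y ∈ U, d x y ≤ r}.ncard ≤ n + 1)

/-- The Euclidean distance on `ℤⁿ`, restricted from `ℝⁿ`. -/
noncomputable def eucDistZ (n : ℕ) (x y : Fin n → ℤ) : ℝ :=
  Real.sqrt (∑ i, ((x i : ℝ) - (y i : ℝ)) ^ 2)

open Finset Function Equiv

section EuclideanDistance

variable {n : ℕ}

lemma abs_sub_le_eucDistZ (x y : Fin n → ℤ) (i : Fin n) :
    ((|x i - y i| : ℤ) : ℝ) ≤ eucDistZ n x y := by
  rw [Int.cast_abs, Int.cast_sub, ← Real.sqrt_sq_eq_abs]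
  exact Real.sqrt_le_sqrt (single_le_sum (f := fun i => ((x i : ℝ) - y i) ^ 2)
    (fun i _ => sq_nonneg _) (mem_univ i))

lemma eucDistZ_le_of_abs_sub_le {x y : Fin n → ℤ} {C : ℤ} (hC : 0 ≤ C)
    (h : ∀ i, |x i - y i| ≤ C) : eucDistZ n x y ≤ n * C := by
  have hC' : (0 : ℝ) ≤ C := by exact_mod_cast hC
  refine Real.sqrt_le_iff.2 ⟨by positivity, ?_⟩
  calc ∑ i, ((x i : ℝ) - y i) ^ 2 ≤ ∑ _i : Fin n, (C : ℝ) ^ 2 := by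
        refine sum_le_sum fun i _ => ?_
        rw [sq_le_sq, abs_of_nonneg hC']
        exact_mod_cast h i
    _ = n * C ^ 2 := by simp
    _ ≤ (n * C) ^ 2 := by
        rw [mul_pow]
        gcongr
        exact_mod_cast Nat.le_self_pow two_ne_zero n

end EuclideanDistance

/-- The simplex `(z, σ)` of the Kuhn triangulation of `[0,N]^d` has the vertices
`z + e (σ 0) + ⋯ + e (σ (k - 1))` for `k = 0, …, d`. -/
abbrev KuhnSimplex (d N : ℕ) : Type := (Fin d → Fin N) × Perm (Fin d)

namespace KuhnSimplex

variable {d N : ℕ}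

def vertex (p : KuhnSimplex d N) (k : Fin (d + 1)) : Fin d → ℕ :=
  fun i => p.1 i + if (p.2.symm i : ℕ) < k then 1 else 0

def labels (ℓ : (Fin d → ℕ) → Fin (d + 1)) (p : KuhnSimplex d N) :
    Fin (d + 1) → Fin (d + 1) :=
  fun k => ℓ (p.vertex k)

lemma vertex_zero (p : KuhnSimplex d N) : p.vertex 0 = fun i => (p.1 i : ℕ) := by
  funext i
  simp [vertex]

lemma vertex_apply_perm (p : KuhnSimplex d N) (k : Fin (d + 1)) (a : Fin d) :
    p.vertex k (p.2 a) = p.1 (p.2 a) + if (a : ℕ) < k then 1 else 0 := by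
  simp [vertex]

lemma vertex_le_succ (p : KuhnSimplex d N) (k : Fin (d + 1)) (i : Fin d) :
    p.vertex k i ≤ p.1 i + 1 := by
  unfold vertex
  split <;> omega

lemma vertex_le (p : KuhnSimplex d N) (k : Fin (d + 1)) (i : Fin d) : p.vertex k i ≤ N :=
  (vertex_le_succ p k i).trans (p.1 i).isLt

end KuhnSimplex

section Door

variable {d : ℕ}

/-- For a simplex whose vertices carry the labels `L`: its facet opposite vertex `k` carries
exactly the labels other than the last one. -/
def IsDoor (L : Fin (d + 1) → Fin (d + 1)) (k : Fin (d + 1)) : Prop :=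
  (∀ j ≠ k, L j ≠ Fin.last d) ∧ ∀ c ≠ Fin.last d, ∃ j ≠ k, L j = c

lemma isDoor_iff_of_forall_ne_eq_comp {L L' : Fin (d + 1) → Fin (d + 1)} (e : Perm (Fin (d + 1)))
    {k : Fin (d + 1)} (h : ∀ j ≠ k, L' j = L (e j)) : IsDoor L' k ↔ IsDoor L (e k) := by
  have hsymm : ∀ j ≠ e k, e.symm j ≠ k := fun j hj hk => hj (by rw [← hk, apply_symm_apply])
  constructor
  · rintro ⟨hlast, hall⟩
    refine ⟨fun j hj => ?_, fun c hc => ?_⟩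
    · simpa [h _ (hsymm j hj)] using hlast _ (hsymm j hj)
    · obtain ⟨j, hjk, rfl⟩ := hall c hc
      exact ⟨e j, e.injective.ne hjk, (h j hjk).symm⟩
  · rintro ⟨hlast, hall⟩
    refine ⟨fun j hj => ?_, fun c hc => ?_⟩
    · rw [h j hj]
      exact hlast _ (e.injective.ne hj)
    · obtain ⟨j, hjk, rfl⟩ := hall c hc
      exact ⟨e.symm j, hsymm j hjk, by simp [h _ (hsymm j hjk)]⟩

lemma isDoor_congr {L L' : Fin (d + 1) → Fin (d + 1)} {k : Fin (d + 1)}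
    (h : ∀ j ≠ k, L' j = L j) : IsDoor L' k ↔ IsDoor L k :=
  isDoor_iff_of_forall_ne_eq_comp 1 h

lemma isDoor_iff_eq_of_surjective {L : Fin (d + 1) → Fin (d + 1)} (hL : Surjective L)
    {k₀ : Fin (d + 1)} (hk₀ : L k₀ = Fin.last d) (k : Fin (d + 1)) : IsDoor L k ↔ k = k₀ := by
  have hinj : Injective L := Finite.injective_iff_surjective.2 hL
  constructor
  · intro hk
    by_contra hne
    exact hk.1 k₀ (Ne.symm hne) hk₀
  · rintro rfl
    refine ⟨fun j hj hlast => hj (hinj (hlast.trans hk₀.symm)), fun c hc => ?_⟩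
    obtain ⟨j, rfl⟩ := hL c
    exact ⟨j, fun hj => hc (hj ▸ hk₀), rfl⟩

lemma isDoor_iff_of_eq {L : Fin (d + 1) → Fin (d + 1)} (hlast : ∀ j, L j ≠ Fin.last d)
    (hall : ∀ c ≠ Fin.last d, ∃ j, L j = c) {j₁ j₂ : Fin (d + 1)} (hne : j₁ ≠ j₂)
    (heq : L j₁ = L j₂) (k : Fin (d + 1)) : IsDoor L k ↔ k = j₁ ∨ k = j₂ := by
  have door : ∀ a b, a ≠ b → L a = L b → IsDoor L a := by
    refine fun a b hab hLab => ⟨fun j _ => hlast j, fun c hc => ?_⟩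
    obtain ⟨j, rfl⟩ := hall c hc
    by_cases hja : j = a
    · exact ⟨b, hab.symm, by rw [← hLab, hja]⟩
    · exact ⟨j, hja, rfl⟩
  refine ⟨fun hk => ?_, ?_⟩
  · by_contra! hk'
    have hinj : Set.InjOn L (univ.erase k : Finset _) :=
      injOn_of_surjOn_of_card_le (t := univ.erase (Fin.last d)) L
        (fun j hj => by simpa using hlast j)
        (fun c hc => by
          obtain ⟨j, hjk, hjc⟩ := hk.2 c (by simpa using hc)
          exact ⟨j, by simpa using hjk, hjc⟩)
        (by simp)
    exact hne (hinj (by simpa using hk'.1.symm) (by simpa using hk'.2.symm) heq)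
  · rintro (rfl | rfl)
    · exact door k j₂ hne heq
    · exact door k j₁ hne.symm heq.symm

lemma not_isDoor_of_forall_ne {L : Fin (d + 1) → Fin (d + 1)} {c : Fin (d + 1)}
    (hc : c ≠ Fin.last d) (hL : ∀ j, L j ≠ c) (k : Fin (d + 1)) : ¬IsDoor L k := fun hk => by
  obtain ⟨j, -, hj⟩ := hk.2 c hc
  exact hL j hj

open Classical in
theorem sum_isDoor (L : Fin (d + 1) → Fin (d + 1)) :
    ∑ k, (if IsDoor L k then 1 else 0 : ZMod 2) = if Surjective L then 1 else 0 := by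
  by_cases hL : Surjective L
  · obtain ⟨k₀, hk₀⟩ := hL (Fin.last d)
    simp [isDoor_iff_eq_of_surjective hL hk₀, hL]
  rw [if_neg hL]
  by_cases hall : ∀ c ≠ Fin.last d, ∃ j, L j = c
  · have hlast : ∀ j, L j ≠ Fin.last d := fun j hj => hL fun c => by
      by_cases hc : c = Fin.last d
      · exact ⟨j, hj.trans hc.symm⟩
      · exact hall c hc
    obtain ⟨j₁, j₂, heq, hne⟩ :=
      Function.not_injective_iff.1 fun hinj => hL (Finite.injective_iff_surjective.1 hinj)
    simp only [isDoor_iff_of_eq hlast hall hne heq, sum_boole]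
    rw [filter_or, filter_eq', filter_eq', if_pos (mem_univ _), if_pos (mem_univ _),
      ← insert_eq, card_pair hne]
    rfl
  · push Not at hall
    obtain ⟨c, hc, hcL⟩ := hall
    simp [not_isDoor_of_forall_ne hc hcL]

end Door

section SuccPred

variable {d N : ℕ}

def succAt (z : Fin d → Fin N) (i : Fin d) : Fin d → Fin N :=
  update z i (if h : (z i : ℕ) + 1 < N then ⟨z i + 1, h⟩ else z i)

def predAt (z : Fin d → Fin N) (i : Fin d) : Fin d → Fin N :=
  update z i ⟨z i - 1, (Nat.sub_le _ _).trans_lt (z i).isLt⟩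

lemma val_succAt_self {z : Fin d → Fin N} {i : Fin d} (h : (z i : ℕ) + 1 < N) :
    (succAt z i i : ℕ) = z i + 1 := by
  simp [succAt, h]

lemma predAt_succAt {z : Fin d → Fin N} {i : Fin d} (h : (z i : ℕ) + 1 < N) :
    predAt (succAt z i) i = z := by
  ext j
  rcases eq_or_ne j i with rfl | hj
  · simp [predAt, succAt, h]
  · simp [predAt, succAt, hj]

lemma succAt_predAt {z : Fin d → Fin N} {i : Fin d} (h : 1 ≤ (z i : ℕ)) :
    succAt (predAt z i) i = z := by
  ext j
  rcases eq_or_ne j i with rfl | hj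
  · have := (z j).isLt
    simp [predAt, succAt, show (z j : ℕ) - 1 + 1 < N by omega]
    omega
  · simp [predAt, succAt, hj]

end SuccPred

namespace KuhnSimplex

variable {d m N : ℕ}

lemma vertex_apply (z : Fin d → Fin N) (σ : Perm (Fin d)) (k : Fin (d + 1)) (i : Fin d) :
    vertex (z, σ) k i = z i + if (σ.symm i : ℕ) < k then 1 else 0 :=
  rfl

/-- Moving the base corner `z` to the next vertex and rotating the order of the steps gives the
same vertices, renumbered. -/
lemma vertex_succAt_mul_finRotate (z : Fin (m + 1) → Fin N) (σ : Perm (Fin (m + 1)))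
    (hz : (z (σ 0) : ℕ) + 1 < N) {j : Fin (m + 2)} (hj : j ≠ Fin.last (m + 1)) :
    vertex (succAt z (σ 0), σ * finRotate (m + 1)) j = vertex (z, σ) (finRotate (m + 2) j) := by
  funext i
  have hjv : (finRotate (m + 2) j : ℕ) = j + 1 := coe_finRotate_of_ne_last hj
  have hjm : (j : ℕ) < m + 1 := Fin.val_lt_last hj
  rw [vertex_apply, vertex_apply, Perm.mul_def, symm_trans_apply]
  rcases eq_or_ne i (σ 0) with rfl | hi
  · have hrot : ((finRotate (m + 1)).symm 0 : ℕ) = m := by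
      rw [(finRotate (m + 1)).symm_apply_eq.2 finRotate_last.symm, Fin.val_last]
    rw [symm_apply_apply, hrot, val_succAt_self hz, hjv]
    rw [if_neg (by omega), if_pos (by rw [Fin.val_zero]; omega)]
  · have h0 : σ.symm i ≠ 0 := fun h => hi (by rw [← h, apply_symm_apply])
    rw [coe_finRotate_symm_of_ne_zero h0, hjv, succAt, update_of_ne hi]
    have := Fin.pos_iff_ne_zero.2 h0
    congr 1
    exact if_congr (by omega) rfl rfl

lemma vertex_mul_swap (z : Fin d → Fin N) (σ : Perm (Fin d)) {k : Fin (d + 1)} (h0 : k ≠ 0)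
    (hl : k ≠ Fin.last d) {j : Fin (d + 1)} (hj : j ≠ k) :
    vertex (z, σ * swap (k.pred h0) (k.castPred hl)) j = vertex (z, σ) j := by
  funext i
  have hjk : (j : ℕ) ≠ k := Fin.val_ne_of_ne hj
  have hk := Fin.pos_iff_ne_zero.2 h0
  rw [vertex_apply, vertex_apply, Perm.mul_def, symm_trans_apply, symm_swap]
  congr 1
  rcases eq_or_ne (σ.symm i) (k.pred h0) with h1 | h1
  · rw [h1, swap_apply_left]
    exact if_congr (by rw [Fin.coe_castPred, Fin.val_pred]; omega) rfl rfl
  rcases eq_or_ne (σ.symm i) (k.castPred hl) with h2 | h2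
  · rw [h2, swap_apply_right]
    exact if_congr (by rw [Fin.coe_castPred, Fin.val_pred]; omega) rfl rfl
  · rw [swap_apply_of_ne_of_ne h1 h2]

/-- The other simplex containing the facet of `t.1` opposite vertex `t.2`, together with the
index of its vertex opposite that facet; meaningless when that facet lies on the boundary. -/
def adjacent (t : KuhnSimplex (m + 1) N × Fin (m + 2)) : KuhnSimplex (m + 1) N × Fin (m + 2) :=
  if h0 : t.2 = 0 then ((succAt t.1.1 (t.1.2 0), t.1.2 * finRotate (m + 1)), Fin.last (m + 1))
  else if hl : t.2 = Fin.last (m + 1) then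
    ((predAt t.1.1 (t.1.2 (Fin.last m)), t.1.2 * (finRotate (m + 1))⁻¹), 0)
  else ((t.1.1, t.1.2 * swap (t.2.pred h0) (t.2.castPred hl)), t.2)

/-- Only the facets opposite the first and the last vertex can lie on the boundary of the cube. -/
def IsBoundaryFacet (t : KuhnSimplex (m + 1) N × Fin (m + 2)) : Prop :=
  t.2 = Fin.last (m + 1) ∧ (t.1.1 (t.1.2 (Fin.last m)) : ℕ) = 0 ∨
    t.2 = 0 ∧ (t.1.1 (t.1.2 0) : ℕ) + 1 = N

lemma adjacent_zero (p : KuhnSimplex (m + 1) N) :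
    adjacent (p, 0) = ((succAt p.1 (p.2 0), p.2 * finRotate (m + 1)), Fin.last (m + 1)) :=
  dif_pos rfl

lemma adjacent_last (p : KuhnSimplex (m + 1) N) :
    adjacent (p, Fin.last (m + 1)) =
      ((predAt p.1 (p.2 (Fin.last m)), p.2 * (finRotate (m + 1))⁻¹), 0) := by
  rw [adjacent, dif_neg (Fin.last_pos).ne', dif_pos rfl]

lemma adjacent_of_ne (p : KuhnSimplex (m + 1) N) {k : Fin (m + 2)} (h0 : k ≠ 0)
    (hl : k ≠ Fin.last (m + 1)) :
    adjacent (p, k) = ((p.1, p.2 * swap (k.pred h0) (k.castPred hl)), k) := by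
  rw [adjacent, dif_neg h0, dif_neg hl]

lemma adjacent_ne (t : KuhnSimplex (m + 1) N × Fin (m + 2)) : adjacent t ≠ t := by
  obtain ⟨p, k⟩ := t
  by_cases h0 : k = 0
  · subst h0
    simp [adjacent_zero, Fin.last_pos.ne']
  by_cases hl : k = Fin.last (m + 1)
  · subst hl
    simp [adjacent_last]
  rw [adjacent_of_ne p h0 hl]
  intro h
  have hswap := congrArg (fun t => t.1.2 (k.pred h0)) h
  simp only [Perm.coe_mul, comp_apply, swap_apply_left] at hswap
  have := congrArg Fin.val (p.2.injective hswap)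
  rw [Fin.coe_castPred, Fin.val_pred] at this
  have := Fin.val_ne_zero_iff.2 h0
  omega

lemma adjacent_adjacent_zero {p : KuhnSimplex (m + 1) N} (hp : (p.1 (p.2 0) : ℕ) + 1 < N) :
    adjacent (adjacent (p, 0)) = (p, 0) := by
  rw [adjacent_zero, adjacent_last]
  simp [predAt_succAt hp]

lemma adjacent_adjacent_last {p : KuhnSimplex (m + 1) N} (hp : 1 ≤ (p.1 (p.2 (Fin.last m)) : ℕ)) :
    adjacent (adjacent (p, Fin.last (m + 1))) = (p, Fin.last (m + 1)) := by
  rw [adjacent_last, adjacent_zero]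
  have h0 : (finRotate (m + 1))⁻¹ 0 = Fin.last m := by
    rw [Perm.inv_eq_iff_eq, finRotate_last]
  rw [Perm.mul_apply, h0, succAt_predAt hp, inv_mul_cancel_right]

lemma lt_of_not_isBoundaryFacet_zero {p : KuhnSimplex (m + 1) N}
    (hp : ¬IsBoundaryFacet (p, 0)) : (p.1 (p.2 0) : ℕ) + 1 < N := by
  have := (p.1 (p.2 0)).isLt
  have : (p.1 (p.2 0) : ℕ) + 1 ≠ N := fun h => hp (.inr ⟨rfl, h⟩)
  omega

lemma one_le_of_not_isBoundaryFacet_last {p : KuhnSimplex (m + 1) N}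
    (hp : ¬IsBoundaryFacet (p, Fin.last (m + 1))) : 1 ≤ (p.1 (p.2 (Fin.last m)) : ℕ) := by
  have : (p.1 (p.2 (Fin.last m)) : ℕ) ≠ 0 := fun h => hp (.inl ⟨rfl, h⟩)
  omega

lemma adjacent_adjacent {t : KuhnSimplex (m + 1) N × Fin (m + 2)} (ht : ¬IsBoundaryFacet t) :
    adjacent (adjacent t) = t := by
  obtain ⟨p, k⟩ := t
  by_cases h0 : k = 0
  · subst h0
    exact adjacent_adjacent_zero (lt_of_not_isBoundaryFacet_zero ht)
  by_cases hl : k = Fin.last (m + 1)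
  · subst hl
    exact adjacent_adjacent_last (one_le_of_not_isBoundaryFacet_last ht)
  rw [adjacent_of_ne p h0 hl, adjacent_of_ne _ h0 hl, mul_assoc, swap_mul_self, mul_one]

lemma not_isBoundaryFacet_adjacent {t : KuhnSimplex (m + 1) N × Fin (m + 2)}
    (ht : ¬IsBoundaryFacet t) : ¬IsBoundaryFacet (adjacent t) := by
  obtain ⟨p, k⟩ := t
  by_cases h0 : k = 0
  · subst h0
    have hp := lt_of_not_isBoundaryFacet_zero ht
    rw [adjacent_zero]
    rintro (⟨-, h⟩ | ⟨h, -⟩)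
    · simp [val_succAt_self hp] at h
    · exact Fin.last_pos.ne' h
  by_cases hl : k = Fin.last (m + 1)
  · subst hl
    have hp := one_le_of_not_isBoundaryFacet_last ht
    have := (p.1 (p.2 (Fin.last m))).isLt
    have h0 : (finRotate (m + 1))⁻¹ 0 = Fin.last m := by
      rw [Perm.inv_eq_iff_eq, finRotate_last]
    rw [adjacent_last]
    rintro (⟨h, -⟩ | ⟨-, h⟩)
    · exact Fin.last_pos.ne' h.symm
    · simp only [Perm.mul_apply, h0, predAt, update_self] at h
      omega
  rw [adjacent_of_ne p h0 hl]
  rintro (⟨h, -⟩ | ⟨h, -⟩)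
  · exact hl h
  · exact h0 h

lemma isDoor_labels_adjacent_zero_iff (ℓ : (Fin (m + 1) → ℕ) → Fin (m + 2))
    {p : KuhnSimplex (m + 1) N} (hp : (p.1 (p.2 0) : ℕ) + 1 < N) :
    IsDoor ((adjacent (p, 0)).1.labels ℓ) (adjacent (p, 0)).2 ↔ IsDoor (p.labels ℓ) 0 := by
  have := isDoor_iff_of_forall_ne_eq_comp (L := p.labels ℓ)
    (L' := labels ℓ (succAt p.1 (p.2 0), p.2 * finRotate (m + 1))) (finRotate (m + 2))
    fun j hj => congrArg ℓ (vertex_succAt_mul_finRotate p.1 p.2 hp hj)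
  rw [finRotate_last] at this
  rwa [adjacent_zero]

lemma isDoor_labels_adjacent_iff (ℓ : (Fin (m + 1) → ℕ) → Fin (m + 2))
    {t : KuhnSimplex (m + 1) N × Fin (m + 2)} (ht : ¬IsBoundaryFacet t) :
    IsDoor ((adjacent t).1.labels ℓ) (adjacent t).2 ↔ IsDoor (t.1.labels ℓ) t.2 := by
  obtain ⟨p, k⟩ := t
  by_cases h0 : k = 0
  · subst h0
    exact isDoor_labels_adjacent_zero_iff ℓ (lt_of_not_isBoundaryFacet_zero ht)
  by_cases hl : k = Fin.last (m + 1)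
  · subst hl
    have hs := not_isBoundaryFacet_adjacent ht
    have hback := adjacent_adjacent ht
    rw [adjacent_last] at hs hback ⊢
    conv_rhs => rw [← hback]
    exact (isDoor_labels_adjacent_zero_iff ℓ (lt_of_not_isBoundaryFacet_zero hs)).symm
  rw [adjacent_of_ne p h0 hl]
  exact isDoor_congr (L := p.labels ℓ) fun j hj => congrArg ℓ (vertex_mul_swap p.1 p.2 h0 hl hj)

open Classical in
lemma sum_surjective_labels_eq_sum_isDoor {d : ℕ} (ℓ : (Fin d → ℕ) → Fin (d + 1)) :
    ∑ p : KuhnSimplex d N, (if Surjective (p.labels ℓ) then 1 else 0 : ZMod 2) =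
      ∑ t : KuhnSimplex d N × Fin (d + 1), if IsDoor (t.1.labels ℓ) t.2 then 1 else 0 := by
  conv_rhs => rw [Fintype.sum_prod_type]
  exact sum_congr rfl fun p _ => (sum_isDoor _).symm

open Classical in
lemma sum_interior_doors (ℓ : (Fin (m + 1) → ℕ) → Fin (m + 2)) :
    ∑ t : KuhnSimplex (m + 1) N × Fin (m + 2) with
      IsDoor (t.1.labels ℓ) t.2 ∧ ¬IsBoundaryFacet t, (1 : ZMod 2) = 0 := by
  refine sum_involution (fun t _ => adjacent t) (fun _ _ => by decide)
    (fun t _ _ => adjacent_ne t) (fun t ht => ?_)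
    (fun t ht => adjacent_adjacent (mem_filter.1 ht).2.2)
  obtain ⟨hd, hb⟩ := (mem_filter.1 ht).2
  exact mem_filter.2 ⟨mem_univ _, (isDoor_labels_adjacent_iff ℓ hb).2 hd,
    not_isBoundaryFacet_adjacent hb⟩

end KuhnSimplex

namespace Equiv.Perm

variable {m : ℕ}

def extendLast (σ : Perm (Fin m)) : Perm (Fin (m + 1)) :=
  permCongr finSuccEquivLast.symm σ.optionCongr

def restrictLast (σ : Perm (Fin (m + 1))) : Perm (Fin m) :=
  (permCongr finSuccEquivLast σ).removeNone

lemma extendLast_castSucc (σ : Perm (Fin m)) (i : Fin m) :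
    σ.extendLast i.castSucc = (σ i).castSucc := by
  simp [extendLast, permCongr_apply]

lemma extendLast_last (σ : Perm (Fin m)) : σ.extendLast (Fin.last m) = Fin.last m := by
  simp [extendLast, permCongr_apply]

lemma castSucc_restrictLast {σ : Perm (Fin (m + 1))} (hσ : σ (Fin.last m) = Fin.last m)
    (i : Fin m) : (σ.restrictLast i).castSucc = σ i.castSucc := by
  have hne : σ i.castSucc ≠ Fin.last m := fun h =>
    (Fin.castSucc_lt_last i).ne (σ.injective (h.trans hσ.symm))
  have hsome : permCongr finSuccEquivLast σ (some i) = some ((σ i.castSucc).castPred hne) := by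
    rw [permCongr_apply, finSuccEquivLast_symm_some, ← eq_symm_apply,
      finSuccEquivLast_symm_some, Fin.castSucc_castPred]
  have h := removeNone_some _ ⟨_, hsome⟩
  rw [hsome, Option.some_inj] at h
  rw [restrictLast, h, Fin.castSucc_castPred]

lemma extendLast_restrictLast {σ : Perm (Fin (m + 1))} (hσ : σ (Fin.last m) = Fin.last m) :
    σ.restrictLast.extendLast = σ := by
  ext x
  induction x using Fin.lastCases with
  | last => rw [extendLast_last, hσ]
  | cast i => rw [extendLast_castSucc, castSucc_restrictLast hσ]

lemma restrictLast_extendLast (σ : Perm (Fin m)) : σ.extendLast.restrictLast = σ := by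
  ext i
  have := castSucc_restrictLast (extendLast_last σ) i
  rw [extendLast_castSucc] at this
  exact congrArg Fin.val (Fin.castSucc_injective _ this)

lemma symm_castSucc_of_apply_last {σ : Perm (Fin (m + 1))} (hσ : σ (Fin.last m) = Fin.last m)
    (i : Fin m) : σ.symm i.castSucc = (σ.restrictLast.symm i).castSucc := by
  rw [symm_apply_eq, ← castSucc_restrictLast hσ, apply_symm_apply]

end Equiv.Perm

namespace KuhnSimplex

variable {m N : ℕ}

def toFace (p : KuhnSimplex (m + 1) N) : KuhnSimplex m N :=
  (Fin.init p.1, p.2.restrictLast)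

def ofFace (hN : 0 < N) (q : KuhnSimplex m N) : KuhnSimplex (m + 1) N :=
  (Fin.snoc q.1 ⟨0, hN⟩, q.2.extendLast)

lemma toFace_ofFace (hN : 0 < N) (q : KuhnSimplex m N) : (ofFace hN q).toFace = q := by
  simp [toFace, ofFace, Perm.restrictLast_extendLast]

lemma ofFace_toFace (hN : 0 < N) {p : KuhnSimplex (m + 1) N}
    (hfix : p.2 (Fin.last m) = Fin.last m) (hz : (p.1 (Fin.last m) : ℕ) = 0) :
    ofFace hN p.toFace = p := by
  have : (⟨0, hN⟩ : Fin N) = p.1 (Fin.last m) := Fin.ext hz.symm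
  simp [toFace, ofFace, Perm.extendLast_restrictLast hfix, this]

lemma vertex_castSucc {p : KuhnSimplex (m + 1) N} (hfix : p.2 (Fin.last m) = Fin.last m)
    (hz : (p.1 (Fin.last m) : ℕ) = 0) (j : Fin (m + 1)) :
    p.vertex j.castSucc = Fin.snoc (p.toFace.vertex j) 0 := by
  funext i
  induction i using Fin.lastCases with
  | last =>
    have : p.2.symm (Fin.last m) = Fin.last m := by rw [symm_apply_eq, hfix]
    simp [vertex, this, hz, j.is_le]
  | cast i =>
    simp [vertex, toFace, Perm.symm_castSucc_of_apply_last hfix, Fin.init]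

end KuhnSimplex

structure IsSpernerLabeling {d : ℕ} (N : ℕ) (ℓ : (Fin d → ℕ) → Fin (d + 1)) : Prop where
  ne_succ : ∀ x : Fin d → ℕ, (∀ i, x i ≤ N) → ∀ i, x i = 0 → ℓ x ≠ i.succ
  ne_zero : ∀ x : Fin d → ℕ, (∀ i, x i ≤ N) → (∃ i, x i = N) → ℓ x ≠ 0

/-- A Sperner labelling of `[0,N]^(m+1)` avoids the last label on the face `x m = 0`, so it
restricts to a labelling of `[0,N]^m`. -/
def faceLabeling {m : ℕ} (ℓ : (Fin (m + 1) → ℕ) → Fin (m + 2)) : (Fin m → ℕ) → Fin (m + 1) :=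
  fun y => if h : ℓ (Fin.snoc y 0) = Fin.last (m + 1) then 0 else (ℓ (Fin.snoc y 0)).castPred h

lemma snoc_zero_le {m N : ℕ} {y : Fin m → ℕ} (hy : ∀ i, y i ≤ N) (i : Fin (m + 1)) :
    (Fin.snoc y 0 : Fin (m + 1) → ℕ) i ≤ N := by
  induction i using Fin.lastCases <;> simp [hy]

namespace IsSpernerLabeling

variable {m N : ℕ} {ℓ : (Fin (m + 1) → ℕ) → Fin (m + 2)}

lemma castSucc_faceLabeling (hℓ : IsSpernerLabeling N ℓ) {y : Fin m → ℕ} (hy : ∀ i, y i ≤ N) :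
    (faceLabeling ℓ y).castSucc = ℓ (Fin.snoc y 0) := by
  have h : ℓ (Fin.snoc y 0) ≠ Fin.last (m + 1) := by
    simpa using hℓ.ne_succ _ (snoc_zero_le hy) (Fin.last m) (by simp)
  simp [faceLabeling, h]

lemma faceLabeling (hℓ : IsSpernerLabeling N ℓ) : IsSpernerLabeling N (_root_.faceLabeling ℓ) where
  ne_succ y hy i hi h := hℓ.ne_succ _ (snoc_zero_le hy) i.castSucc (by simpa using hi) <| by
    rw [← castSucc_faceLabeling hℓ hy, h, Fin.succ_castSucc]
  ne_zero y hy hN h := by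
    obtain ⟨i, hi⟩ := hN
    refine hℓ.ne_zero _ (snoc_zero_le hy) ⟨i.castSucc, by simpa using hi⟩ ?_
    rw [← castSucc_faceLabeling hℓ hy, h, Fin.castSucc_zero]

/-- Label `0` is missing on a facet in a face `x i = N`. -/
lemma not_isDoor_zero (hℓ : IsSpernerLabeling N ℓ) {p : KuhnSimplex (m + 1) N}
    (hp : (p.1 (p.2 0) : ℕ) + 1 = N) : ¬IsDoor (p.labels ℓ) 0 := fun hd => by
  obtain ⟨j, hj, hjc⟩ := hd.2 0 Fin.last_pos.ne
  refine hℓ.ne_zero _ (p.vertex_le j) ⟨p.2 0, ?_⟩ hjc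
  have := Fin.val_ne_zero_iff.2 hj
  rw [p.vertex_apply_perm, if_pos (by rw [Fin.val_zero]; omega), hp]

/-- On a facet in the face `x (σ m) = 0` the label `σ m + 1` is missing, and it is not the last
label unless `σ m = m`. -/
lemma apply_last_of_isDoor_last (hℓ : IsSpernerLabeling N ℓ) {p : KuhnSimplex (m + 1) N}
    (hp : (p.1 (p.2 (Fin.last m)) : ℕ) = 0) (hd : IsDoor (p.labels ℓ) (Fin.last (m + 1))) :
    p.2 (Fin.last m) = Fin.last m := by
  by_contra hne
  obtain ⟨j, hj, hjc⟩ := hd.2 (p.2 (Fin.last m)).succ (by simpa using hne)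
  refine hℓ.ne_succ _ (p.vertex_le j) (p.2 (Fin.last m)) ?_ hjc
  have := Fin.val_lt_last hj
  rw [p.vertex_apply_perm, if_neg (by rw [Fin.val_last]; omega), hp]

lemma isDoor_last_iff (hℓ : IsSpernerLabeling N ℓ) {p : KuhnSimplex (m + 1) N}
    (hfix : p.2 (Fin.last m) = Fin.last m) (hz : (p.1 (Fin.last m) : ℕ) = 0) :
    IsDoor (p.labels ℓ) (Fin.last (m + 1)) ↔
      Surjective (p.toFace.labels (_root_.faceLabeling ℓ)) := by
  have hlab : ∀ j : Fin (m + 1),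
      p.labels ℓ j.castSucc = (p.toFace.labels (_root_.faceLabeling ℓ) j).castSucc := fun j => by
    rw [KuhnSimplex.labels, KuhnSimplex.labels, p.vertex_castSucc hfix hz,
      castSucc_faceLabeling hℓ (p.toFace.vertex_le j)]
  constructor
  · intro hd c
    obtain ⟨j, hj, hjc⟩ := hd.2 c.castSucc (Fin.castSucc_lt_last c).ne
    obtain ⟨j, rfl⟩ := Fin.exists_castSucc_eq.2 hj
    exact ⟨j, Fin.castSucc_injective _ ((hlab j).symm.trans hjc)⟩
  · intro hs
    refine ⟨fun j hj => ?_, fun c hc => ?_⟩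
    · obtain ⟨j, rfl⟩ := Fin.exists_castSucc_eq.2 hj
      rw [hlab j]
      exact (Fin.castSucc_lt_last _).ne
    · obtain ⟨c, rfl⟩ := Fin.exists_castSucc_eq.2 hc
      obtain ⟨j, hj⟩ := hs c
      exact ⟨j.castSucc, (Fin.castSucc_lt_last _).ne, by rw [hlab j, hj]⟩

lemma isDoor_and_isBoundaryFacet_iff (hℓ : IsSpernerLabeling N ℓ)
    {t : KuhnSimplex (m + 1) N × Fin (m + 2)} :
    IsDoor (t.1.labels ℓ) t.2 ∧ KuhnSimplex.IsBoundaryFacet t ↔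
      t.2 = Fin.last (m + 1) ∧ t.1.2 (Fin.last m) = Fin.last m ∧ (t.1.1 (Fin.last m) : ℕ) = 0 ∧
        Surjective (t.1.toFace.labels (_root_.faceLabeling ℓ)) := by
  obtain ⟨p, k⟩ := t
  constructor
  · rintro ⟨hd, ⟨rfl, hz⟩ | ⟨rfl, htop⟩⟩
    · have hfix := hℓ.apply_last_of_isDoor_last hz hd
      rw [hfix] at hz
      exact ⟨rfl, hfix, hz, (hℓ.isDoor_last_iff hfix hz).1 hd⟩
    · exact absurd hd (hℓ.not_isDoor_zero htop)
  · rintro ⟨rfl, hfix, hz, hs⟩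
    exact ⟨(hℓ.isDoor_last_iff hfix hz).2 hs, .inl ⟨rfl, by rwa [hfix]⟩⟩

open Classical in
lemma card_boundary_doors (hN : 0 < N) (hℓ : IsSpernerLabeling N ℓ) :
    #{t : KuhnSimplex (m + 1) N × Fin (m + 2) |
        IsDoor (t.1.labels ℓ) t.2 ∧ KuhnSimplex.IsBoundaryFacet t} =
      #{q : KuhnSimplex m N | Surjective (q.labels (_root_.faceLabeling ℓ))} := by
  simp only [hℓ.isDoor_and_isBoundaryFacet_iff]
  refine card_bij' (fun t _ => t.1.toFace) (fun q _ => (KuhnSimplex.ofFace hN q, Fin.last (m + 1)))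
    (fun t ht => by simpa using (mem_filter.1 ht).2.2.2.2) (fun q hq => ?_)
    (fun t ht => ?_) (fun q _ => KuhnSimplex.toFace_ofFace hN q)
  · simp only [mem_filter, mem_univ, true_and] at hq ⊢
    rw [KuhnSimplex.toFace_ofFace]
    exact ⟨Perm.extendLast_last _, by simp [KuhnSimplex.ofFace], hq⟩
  · obtain ⟨hk, hfix, hz, -⟩ := (mem_filter.1 ht).2
    rw [KuhnSimplex.ofFace_toFace hN hfix hz, ← hk]

end IsSpernerLabeling

open Classical in
theorem IsSpernerLabeling.card_surjective_labels {d N : ℕ} (hN : 0 < N)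
    {ℓ : (Fin d → ℕ) → Fin (d + 1)} (hℓ : IsSpernerLabeling N ℓ) :
    (#{p : KuhnSimplex d N | Surjective (p.labels ℓ)} : ZMod 2) = 1 := by
  induction d with
  | zero =>
    have : ∀ p : KuhnSimplex 0 N, Surjective (p.labels ℓ) := fun p c =>
      ⟨0, Fin.subsingleton_one.elim _ _⟩
    simp [this]
  | succ m ih =>
    rw [← sum_boole, KuhnSimplex.sum_surjective_labels_eq_sum_isDoor, ← sum_filter,
      ← sum_filter_add_sum_filter_not _ KuhnSimplex.IsBoundaryFacet, filter_filter, filter_filter,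
      KuhnSimplex.sum_interior_doors, add_zero, sum_const, nsmul_one,
      hℓ.card_boundary_doors hN]
    exact ih hℓ.faceLabeling

theorem IsSpernerLabeling.exists_surjective_labels {d N : ℕ} (hN : 0 < N)
    {ℓ : (Fin d → ℕ) → Fin (d + 1)} (hℓ : IsSpernerLabeling N ℓ) :
    ∃ p : KuhnSimplex d N, Surjective (p.labels ℓ) := by
  classical
  have h := hℓ.card_surjective_labels hN
  by_contra! hnone
  simp [hnone] at h

section UpperBound

/-- The cube of the grid `L • ℤⁿ + (a, …, a)` with lower corner `L • z + (a, …, a)`, shrunk by `t`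
on every side. -/
def shrunkCube {n : ℕ} (L a t : ℤ) (z : Fin n → ℤ) : Set (Fin n → ℤ) :=
  {x | ∀ i, (x i - a) / L = z i ∧ (x i - a) % L ∈ Set.Icc t (L - t)}

variable {n : ℕ} {L a t : ℤ} {z x y : Fin n → ℤ}

lemma abs_sub_le_of_mem_shrunkCube (hx : x ∈ shrunkCube L a t z) (hy : y ∈ shrunkCube L a t z)
    (i : Fin n) : |x i - y i| ≤ L - 2 * t := by
  obtain ⟨hxq, hxr, hxr'⟩ := hx i
  obtain ⟨hyq, hyr, hyr'⟩ := hy i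
  have hx' := Int.mul_ediv_add_emod (x i - a) L
  have hy' := Int.mul_ediv_add_emod (y i - a) L
  rw [hxq] at hx'
  rw [hyq] at hy'
  rw [abs_le]
  constructor <;> linarith

lemma ediv_eq_of_mem_shrunkCube (hy : y ∈ shrunkCube L a t z) (hxy : ∀ i, |x i - y i| < t) :
    (fun i => (x i - a) / L) = z := by
  funext i
  obtain ⟨hyq, hyr, hyr'⟩ := hy i
  have hy' := Int.mul_ediv_add_emod (y i - a) L
  rw [hyq] at hy'
  obtain ⟨h₁, h₂⟩ := abs_lt.1 (hxy i)
  exact ((Int.ediv_emod_unique (by linarith)).2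
    ⟨(sub_add_cancel (x i - a) (L * z i)), by linarith, by linarith⟩).1

/-- Two residues `u` and `u - e` modulo `L` cannot both lie within `t` of `0` when `e` is more than
`2t` away from `Lℤ`. -/
lemma emod_mem_Icc_or_sub_emod_mem_Icc (u : ℤ) {e : ℤ} (ht : 0 ≤ t) (he : 2 * t < e)
    (he' : e + 2 * t < L) : u % L ∈ Set.Icc t (L - t) ∨ (u - e) % L ∈ Set.Icc t (L - t) := by
  have hL : 0 < L := by linarith
  have h₁ := Int.mul_ediv_add_emod u L
  have h₂ := Int.mul_ediv_add_emod (u - e) L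
  have := Int.emod_nonneg u hL.ne'
  have := Int.emod_lt_of_pos u hL
  have := Int.emod_nonneg (u - e) hL.ne'
  have := Int.emod_lt_of_pos (u - e) hL
  obtain ⟨K, hK⟩ : ∃ K, K = u / L - (u - e) / L := ⟨_, rfl⟩
  have key : e = L * K + (u % L - (u - e) % L) := by rw [hK]; linarith
  have hK₁ : -1 < K := lt_of_mul_lt_mul_left (a := L) (by linarith) hL.le
  have hK₂ : K < 2 := lt_of_mul_lt_mul_left (a := L) (by linarith) hL.le
  simp only [Set.mem_Icc]
  interval_cases K <;> omega

/-- Along each coordinate at most one of the `n + 1` shifts `j s` puts `x` into a wall, so some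
shift puts no coordinate of `x` into a wall. -/
lemma exists_forall_emod_mem_Icc {s : ℤ} (ht : 0 ≤ t) (hs : 2 * t < s) (hL : (n + 1) * s ≤ L)
    (x : Fin n → ℤ) : ∃ j : Fin (n + 1), ∀ i, (x i - j * s) % L ∈ Set.Icc t (L - t) := by
  by_contra! hbad
  choose f hf using hbad
  obtain ⟨a, b, hab, hfab⟩ := Fintype.exists_ne_map_eq_of_card_lt f (by simp)
  wlog hlt : a < b generalizing a b
  · exact this b a hab.symm hfab.symm (lt_of_le_of_ne (not_lt.1 hlt) hab.symm)
  have hab' : (a : ℤ) + 1 ≤ b := by exact_mod_cast hlt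
  have hb : (b : ℤ) ≤ n := by exact_mod_cast Nat.lt_succ_iff.1 b.isLt
  have hs' : 0 < s := by linarith
  rcases emod_mem_Icc_or_sub_emod_mem_Icc (x (f a) - a * s) (e := (b - a) * s) ht (by nlinarith)
    (by nlinarith) with h | h
  · exact hf a h
  · rw [show x (f a) - a * s - (b - a) * s = x (f b) - b * s by rw [hfab]; ring] at h
    exact hf b h

lemma finite_and_ncard_le_of_subset_range {X : Type*} {S : Set (Set X)} {f : Fin (n + 1) → Set X}
    (h : S ⊆ Set.range f) : S.Finite ∧ S.ncard ≤ n + 1 := by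
  refine ⟨(Set.finite_range f).subset h, (Set.ncard_le_ncard h (Set.finite_range f)).trans ?_⟩
  rw [← Set.image_univ]
  exact (Set.ncard_image_le Set.finite_univ).trans (by simp)

theorem asdimLE_eucDistZ (n : ℕ) : AsdimLE (eucDistZ n) n := by
  intro r _
  obtain ⟨t, hrt⟩ := exists_nat_gt r
  set s : ℤ := 2 * t + 1
  set L : ℤ := (n + 1) * s
  set cube : Fin (n + 1) → (Fin n → ℤ) → Set (Fin n → ℤ) := fun j z => shrunkCube L (j * s) t z
  refine ⟨Set.range (uncurry cube), fun x => ?_, ⟨n * L, ?_⟩, fun x => ?_⟩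
  · obtain ⟨j, hj⟩ := exists_forall_emod_mem_Icc (t := t) (s := s) (L := L) (by positivity)
      (by omega) le_rfl x
    exact ⟨_, Set.mem_range_self (j, fun i => (x i - j * s) / L), fun i => ⟨rfl, hj i⟩⟩
  · rintro _ ⟨⟨j, z⟩, rfl⟩ x hx y hy
    exact eucDistZ_le_of_abs_sub_le (by positivity)
      fun i => (abs_sub_le_of_mem_shrunkCube hx hy i).trans (by linarith)
  · refine finite_and_ncard_le_of_subset_range (f := fun j => cube j fun i => (x i - j * s) / L) ?_
    rintro _ ⟨⟨⟨j, z⟩, rfl⟩, y, hy, hxy⟩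
    refine ⟨j, ?_⟩
    simp only [uncurry, cube]
    rw [ediv_eq_of_mem_shrunkCube hy fun i => ?_]
    exact_mod_cast (abs_sub_le_eucDistZ x y i).trans_lt (hxy.trans_lt hrt)

end UpperBound

section LowerBound

variable {n : ℕ}

open Classical in
noncomputable def reachLabel (N : ℕ) (V : Set (Fin n → ℤ)) : Fin (n + 1) :=
  if h : ∃ i, ∃ u ∈ V, (N : ℤ) ≤ u i then h.choose.succ else 0

lemma exists_le_of_reachLabel_eq_succ {N : ℕ} {V : Set (Fin n → ℤ)} {i : Fin n}
    (h : reachLabel N V = i.succ) : ∃ u ∈ V, (N : ℤ) ≤ u i := by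
  unfold reachLabel at h
  split_ifs at h with hex
  · exact Fin.succ_injective _ h ▸ hex.choose_spec
  · exact absurd h.symm (Fin.succ_ne_zero i)

lemma reachLabel_ne_zero {N : ℕ} {V : Set (Fin n → ℤ)} {u : Fin n → ℤ} {i : Fin n} (hu : u ∈ V)
    (hui : (N : ℤ) ≤ u i) : reachLabel N V ≠ 0 := by
  rw [reachLabel, dif_pos ⟨i, u, hu, hui⟩]
  exact Fin.succ_ne_zero _

lemma isSpernerLabeling_reachLabel {N : ℕ} {U : (Fin n → ℤ) → Set (Fin n → ℤ)}
    (hU : ∀ x, x ∈ U x) (hdiam : ∀ x, ∀ u ∈ U x, eucDistZ n u x < N) :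
    IsSpernerLabeling N fun x : Fin n → ℕ => reachLabel N (U fun i => x i) where
  ne_succ x _ i hi h := by
    obtain ⟨u, hu, hui⟩ := exists_le_of_reachLabel_eq_succ h
    have := (abs_sub_le_eucDistZ u _ i).trans_lt (hdiam _ u hu)
    simp only [hi, Nat.cast_zero, sub_zero] at this
    have : |u i| < N := by exact_mod_cast this
    exact absurd (hui.trans (le_abs_self _)) this.not_ge
  ne_zero x _ := fun ⟨i, hi⟩ => reachLabel_ne_zero (i := i) (hU _) (by simp [hi])

lemma KuhnSimplex.eucDistZ_vertex_zero_le {N : ℕ} (p : KuhnSimplex n N) (k : Fin (n + 1)) :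
    eucDistZ n (fun i => p.vertex 0 i) (fun i => p.vertex k i) ≤ n := by
  simpa using eucDistZ_le_of_abs_sub_le zero_le_one fun i => by
    have := p.vertex_le_succ k i
    simp only [p.vertex_zero]
    have : (p.1 i : ℕ) ≤ p.vertex k i := by simp [KuhnSimplex.vertex]
    rw [abs_le]
    constructor <;> omega

theorem not_asdimLE_eucDistZ (hn : 1 ≤ n) : ¬AsdimLE (eucDistZ n) (n - 1) := by
  intro H
  obtain ⟨𝒰, hcov, ⟨B, hB⟩, hmult⟩ := H n (by exact_mod_cast hn)
  choose U hU𝒰 hU using hcov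
  obtain ⟨N, hBN⟩ := exists_nat_gt B
  have hdiam : ∀ x, ∀ u ∈ U x, eucDistZ n u x < N :=
    fun x u hu => (hB _ (hU𝒰 x) u hu x (hU x)).trans_lt hBN
  have hN : 0 < N := by exact_mod_cast (show (0 : ℝ) < N by simpa [eucDistZ] using hdiam 0 0 (hU 0))
  obtain ⟨p, hp⟩ := (isSpernerLabeling_reachLabel hU hdiam).exists_surjective_labels hN
  set V : Fin (n + 1) → Set (Fin n → ℤ) := fun k => U fun i => p.vertex k i
  have hV : Injective V := fun k k' h =>
    Finite.injective_iff_surjective.2 hp (congrArg (reachLabel N) h)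
  have hsub : Set.range V ⊆
      {W | W ∈ 𝒰 ∧ ∃ y ∈ W, eucDistZ n (fun i => p.vertex 0 i) y ≤ n} := by
    rintro _ ⟨k, rfl⟩
    exact ⟨hU𝒰 _, _, hU _, p.eucDistZ_vertex_zero_le k⟩
  have hcard := (Set.ncard_le_ncard hsub (hmult _).1).trans (hmult _).2
  rw [Set.ncard_range_of_injective hV, Nat.card_eq_fintype_card, Fintype.card_fin] at hcard
  omega

end LowerBound

/-- The asymptotic dimension of `ℤⁿ` is exactly `n`. -/
theorem asdim_int_pow (n : ℕ) (hn : 1 ≤ n) :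
    AsdimLE (eucDistZ n) n ∧ ¬ AsdimLE (eucDistZ n) (n - 1) :=
  ⟨asdimLE_eucDistZ n, not_asdimLE_eucDistZ hn⟩
end

section
/- For every n ≥ 1, the free group F_n on n generators, equipped with the word metric associated to the finite symmetric generating set consisting of the n free generators and their inverses, has asymptotic dimension exactly 1: it has asymptotic dimension at most 1, and does not have asymptotic dimension at most 0. -/
/-- The word length of `g` with respect to a generating set `S`. -/
noncomputable def wordLength {G : Type*} [Group G] (S : Set G) (g : G) : ℕ :=
  sInf {n : ℕ | ∃ w : List G, w.length = n ∧ (∀ s ∈ w, s ∈ S) ∧ w.prod = g}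

/-- The standard symmetric generating set of the free group on `n` generators,
consisting of the free generators and their inverses. -/
def freeGens (n : ℕ) : Set (FreeGroup (Fin n)) :=
  {x | ∃ i : Fin n, x = FreeGroup.of i ∨ x = (FreeGroup.of i)⁻¹}

set_option linter.unusedSectionVars false
set_option linter.unnecessarySeqFocus false

namespace FreeGroup
variable {α : Type*} [DecidableEq α]

lemma invRev_append_singleton (u : List (α × Bool)) (x : α × Bool) :
    invRev (u ++ [x]) = (x.1, !x.2) :: invRev u := by
  simp [invRev]

lemma reduce_append_singleton (u : List (α × Bool)) (x : α × Bool) (hu : reduce u = u) :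
    reduce (u ++ [x]) = u ++ [x] ∨
    ∃ t, u = reduce (u ++ [x]) ++ [t] := by
  have hinv : invRev (reduce (invRev (u ++ [x]))) = reduce (u ++ [x]) := by
    rw [reduce_invRev, invRev_invRev]
  rw [invRev_append_singleton] at hinv
  have hru : reduce (invRev u) = invRev u := by
    rw [reduce_invRev, hu]
  rw [reduce.cons, hru] at hinv
  rcases hv : invRev u with _ | ⟨hd, tl⟩
  · rw [hv] at hinv
    left
    have hu0 : u = [] := by
      have := congrArg invRev hv
      rwa [invRev_invRev, invRev_empty] at this
    simp only at hinv
    rw [← hinv, hu0]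
    simp [invRev]
  · rw [hv] at hinv
    simp only at hinv
    split_ifs at hinv with hc
    · right
      refine ⟨(hd.1, !hd.2), ?_⟩
      have : u = invRev (hd :: tl) := by
        have := congrArg invRev hv
        rwa [invRev_invRev] at this
      rw [← hinv, this]
      simp [invRev]
    · left
      rw [← hinv]
      have h2 : ((x.1, !x.2) :: hd :: tl) = invRev (u ++ [x]) := by
        rw [invRev_append_singleton, hv]
      rw [h2, invRev_invRev]

/-- Multiplying on the right by one letter: one word is a prefix of the other. -/
lemma toWord_mul_single_prefix (g : FreeGroup α) (x : α × Bool) :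
    g.toWord <+: (g * mk [x]).toWord ∨ (g * mk [x]).toWord <+: g.toWord := by
  have hrepr : (g * mk [x]).toWord = reduce (g.toWord ++ [x]) := by
    conv_lhs => rw [← mk_toWord (x := g)]
    rw [mul_mk, toWord_mk]
  rcases reduce_append_singleton g.toWord x (reduce_toWord g) with h | ⟨t, ht⟩
  · left
    rw [hrepr, h]
    exact ⟨[x], rfl⟩
  · right
    rw [hrepr]
    exact ⟨[t], by rw [← ht]⟩

/-- Take-equality for a one-letter step, as long as both words are long enough. -/
lemma take_toWord_mul_single (g : FreeGroup α) (x : α × Bool) (L : ℕ)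
    (h1 : L ≤ norm g) (h2 : L ≤ norm (g * mk [x])) :
    (g.toWord).take L = ((g * mk [x]).toWord).take L := by
  rcases toWord_mul_single_prefix g x with ⟨t, ht⟩ | ⟨t, ht⟩
  · rw [← ht, List.take_append_of_le_length h1]
  · rw [← ht, List.take_append_of_le_length h2]

end FreeGroup


namespace FreeGroup
variable {α : Type*} [DecidableEq α]

lemma norm_le_norm_add (g h : FreeGroup α) : norm g ≤ norm h + norm (h⁻¹ * g) := by
  calc norm g = norm (h * (h⁻¹ * g)) := by group
    _ ≤ norm h + norm (h⁻¹ * g) := norm_mul_le _ _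

/-- If two far-from-origin elements are close, their reduced words share a long prefix. -/
lemma take_eq_of_close (L R : ℕ) (y z : FreeGroup α)
    (hy : L + R ≤ norm y) (hz : L + R ≤ norm z) (hd : norm (y⁻¹ * z) ≤ 2 * R) :
    (y.toWord).take L = (z.toWord).take L := by
  set w := (y⁻¹ * z).toWord with hw
  have hlen : w.length ≤ 2 * R := hd
  have hyz : y * mk w = z := by rw [hw, mk_toWord]; group
  -- norms of intermediate points
  have hnorm : ∀ i, L ≤ norm (y * mk (w.take i)) := by
    intro i
    have e1 : norm y ≤ norm (y * mk (w.take i)) + (w.take i).length := by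
      calc norm y = norm ((y * mk (w.take i)) * (mk (w.take i))⁻¹) := by group
        _ ≤ norm (y * mk (w.take i)) + norm (mk (w.take i))⁻¹ := norm_mul_le _ _
        _ ≤ _ := by rw [norm_inv_eq]; exact Nat.add_le_add_left norm_mk_le _
    have e2 : norm z ≤ norm (y * mk (w.take i)) + (w.drop i).length := by
      have hz' : (y * mk (w.take i)) * mk (w.drop i) = z := by
        rw [mul_assoc, mul_mk, List.take_append_drop, hyz]
      calc norm z = norm ((y * mk (w.take i)) * mk (w.drop i)) := by rw [hz']
        _ ≤ _ := le_trans (norm_mul_le _ _) (Nat.add_le_add_left norm_mk_le _)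
    rw [List.length_take] at e1
    rw [List.length_drop] at e2
    omega
  have key : ∀ i, (y.toWord).take L = ((y * mk (w.take i)).toWord).take L := by
    intro i
    induction i with
    | zero => simp [← one_eq_mk]
    | succ i ih =>
      by_cases hi : i < w.length
      · have hstep : w.take (i + 1) = w.take i ++ [w[i]] := by
          rw [List.take_succ, List.getElem?_eq_getElem hi]
          rfl
        have : y * mk (w.take (i + 1)) = (y * mk (w.take i)) * mk [w[i]] := by
          rw [hstep, ← mul_mk, mul_assoc]
        rw [this, ih]
        exact take_toWord_mul_single _ _ L (hnorm i) (by rw [← this]; exact hnorm (i+1))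
      · have : w.take (i + 1) = w.take i := by
          rw [List.take_of_length_le (by omega), List.take_of_length_le (by omega)]
        rw [this]
        exact ih
  have := key w.length
  rwa [List.take_length, hyz] at this

/-- Elements sharing a prefix of length `L` are at distance at most the sum of excesses. -/
lemma norm_mul_inv_le_of_take_eq (L : ℕ) (y z : FreeGroup α)
    (h : (y.toWord).take L = (z.toWord).take L) :
    norm (y⁻¹ * z) ≤ (norm y - L) + (norm z - L) := by
  have hy : y = mk ((y.toWord).take L) * mk ((y.toWord).drop L) := by
    rw [mul_mk, List.take_append_drop, mk_toWord]
  have hz : z = mk ((z.toWord).take L) * mk ((z.toWord).drop L) := by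
    rw [mul_mk, List.take_append_drop, mk_toWord]
  have : y⁻¹ * z = (mk ((y.toWord).drop L))⁻¹ * mk ((z.toWord).drop L) := by
    conv_lhs => rw [hy, hz]
    rw [h]
    group
  rw [this]
  calc norm _ ≤ norm (mk ((y.toWord).drop L))⁻¹ + norm (mk ((z.toWord).drop L)) :=
        norm_mul_le _ _
    _ ≤ ((y.toWord).drop L).length + ((z.toWord).drop L).length := by
        rw [norm_inv_eq]; exact Nat.add_le_add norm_mk_le norm_mk_le
    _ = (norm y - L) + (norm z - L) := by
        rw [List.length_drop, List.length_drop]; rfl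

end FreeGroup

open FreeGroup in
lemma prod_map_mk {α : Type*} (w : List (α × Bool)) :
    (w.map (fun x => FreeGroup.mk [x])).prod = FreeGroup.mk w := by
  induction w with
  | nil => simp [FreeGroup.one_eq_mk]
  | cons a t ih => simp [ih, FreeGroup.mul_mk]

open FreeGroup in
lemma mk_single_mem_freeGens {n : ℕ} (x : Fin n × Bool) :
    FreeGroup.mk [x] ∈ freeGens n := by
  refine ⟨x.1, ?_⟩
  cases hb : x.2
  · right
    show FreeGroup.mk [x] = (FreeGroup.mk [(x.1, true)])⁻¹
    rw [FreeGroup.inv_mk]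
    congr 1
    simp [FreeGroup.invRev, ← hb]
  · left
    show FreeGroup.mk [x] = FreeGroup.mk [(x.1, true)]
    congr 1
    simp [← hb]

open FreeGroup in
lemma norm_mem_freeGens {n : ℕ} {s : FreeGroup (Fin n)} (hs : s ∈ freeGens n) :
    FreeGroup.norm s = 1 := by
  obtain ⟨i, h | h⟩ := hs <;> subst h <;> simp

open FreeGroup in
lemma wordLength_eq_norm {n : ℕ} (g : FreeGroup (Fin n)) :
    wordLength (freeGens n) g = FreeGroup.norm g := by
  have hmem : FreeGroup.norm g ∈
      {m : ℕ | ∃ w : List (FreeGroup (Fin n)), w.length = m ∧ (∀ s ∈ w, s ∈ freeGens n) ∧ w.prod = g} := by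
    refine ⟨g.toWord.map (fun x => FreeGroup.mk [x]), by simp [FreeGroup.norm], ?_, ?_⟩
    · intro s hs
      simp only [List.mem_map] at hs
      obtain ⟨x, _, rfl⟩ := hs
      exact mk_single_mem_freeGens x
    · rw [prod_map_mk, FreeGroup.mk_toWord]
  have hlb : ∀ m ∈ {m : ℕ | ∃ w : List (FreeGroup (Fin n)), w.length = m ∧ (∀ s ∈ w, s ∈ freeGens n) ∧ w.prod = g},
      FreeGroup.norm g ≤ m := by
    rintro m ⟨w, rfl, hw, rfl⟩
    clear hmem
    induction w with
    | nil => simp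
    | cons a t ih =>
      simp only [List.prod_cons, List.length_cons]
      calc FreeGroup.norm (a * t.prod) ≤ FreeGroup.norm a + FreeGroup.norm t.prod :=
            FreeGroup.norm_mul_le _ _
        _ ≤ 1 + t.length := by
            have := norm_mem_freeGens (hw a (by simp))
            have := ih (fun s hs => hw s (by simp [hs]))
            omega
        _ = t.length + 1 := by omega
  exact le_antisymm (Nat.sInf_le hmem) (hlb _ (Nat.sInf_mem ⟨_, hmem⟩))


lemma subset_pair_of_three {X : Type*} (S : Set X)
    (h3 : ∀ a ∈ S, ∀ b ∈ S, ∀ c ∈ S, a = b ∨ a = c ∨ b = c) :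
    S.Finite ∧ S.ncard ≤ 2 := by
  rcases S.eq_empty_or_nonempty with rfl | ⟨a, ha⟩
  · simp
  have hsub : ∃ b, S ⊆ {a, b} := by
    by_cases hss : ∀ c ∈ S, c = a
    · exact ⟨a, fun c hc => by simp [hss c hc]⟩
    · push_neg at hss
      obtain ⟨b, hb, hba⟩ := hss
      refine ⟨b, fun c hc => ?_⟩
      rcases h3 a ha b hb c hc with h | h | h
      · exact absurd h.symm hba
      · exact Or.inl h.symm
      · exact Or.inr h.symm
  obtain ⟨b, hsub⟩ := hsub
  have hpf : ({a, b} : Set X).Finite := (Set.finite_singleton _).insert _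
  refine ⟨hpf.subset hsub, le_trans (Set.ncard_le_ncard hsub hpf) ?_⟩
  exact le_trans (Set.ncard_insert_le _ _) (by simp)


open FreeGroup in
lemma part1 (n : ℕ) :
    AsdimLE (fun g h : FreeGroup (Fin n) =>
      (FreeGroup.norm (g⁻¹ * h) : ℝ)) 1 := by
  intro r hr
  obtain ⟨R, hR1, hrR⟩ : ∃ R : ℕ, 1 ≤ R ∧ r ≤ (R : ℝ) :=
    ⟨max 1 ⌈r⌉₊, le_max_left _ _,
      le_trans (Nat.le_ceil r) (by exact_mod_cast le_max_right _ _)⟩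
  obtain ⟨k, hk⟩ : ∃ k : ℕ, k = 4 * R := ⟨_, rfl⟩
  have hk0 : 0 < k := by omega
  set Pc : FreeGroup (Fin n) → Set (FreeGroup (Fin n)) := fun w =>
    {y | norm y / k = norm w / k ∧
      (y.toWord).take ((norm w / k) * k - R) = (w.toWord).take ((norm w / k) * k - R)}
    with hPc
  have hself : ∀ w, w ∈ Pc w := fun w => ⟨rfl, rfl⟩
  have hPc_eq : ∀ y z : FreeGroup (Fin n), norm y / k = norm z / k →
      (y.toWord).take ((norm z / k) * k - R) = (z.toWord).take ((norm z / k) * k - R) →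
      Pc y = Pc z := by
    intro y z hj ht
    ext u
    simp only [hPc, Set.mem_setOf_eq, hj]
    constructor
    · rintro ⟨h1, h2⟩; exact ⟨h1, h2.trans ht⟩
    · rintro ⟨h1, h2⟩; exact ⟨h1, h2.trans ht.symm⟩
  have hmem_eq : ∀ y w : FreeGroup (Fin n), y ∈ Pc w → Pc y = Pc w := by
    rintro y w ⟨hj, ht⟩
    exact hPc_eq y w hj (by rw [← hj] at ht ⊢ <;> exact ht)
  have hlev_le : ∀ y : FreeGroup (Fin n), (norm y / k) * k ≤ norm y :=
    fun y => Nat.div_mul_le_self _ _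
  have hlev_lt : ∀ y : FreeGroup (Fin n), norm y < (norm y / k) * k + k := by
    intro y
    have h1 := Nat.div_add_mod' (norm y) k
    have h2 := Nat.mod_lt (norm y) hk0
    omega
  refine ⟨Set.range Pc, fun x => ⟨Pc x, ⟨x, rfl⟩, hself x⟩, ?_, ?_⟩
  · -- uniformly bounded
    refine ⟨((2 * (k + R) : ℕ) : ℝ), ?_⟩
    rintro U ⟨w, rfl⟩ y hy z hz
    obtain ⟨hjy, hty⟩ := hy
    obtain ⟨hjz, htz⟩ := hz
    have hb := norm_mul_inv_le_of_take_eq ((norm w / k) * k - R) y z (hty.trans htz.symm)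
    have hnorm : norm (y⁻¹ * z) ≤ 2 * (k + R) := by
      have h1 := hlev_le y
      have h2 := hlev_lt y
      have h3 := hlev_le z
      have h4 := hlev_lt z
      rw [hjy] at h1 h2
      rw [hjz] at h3 h4
      generalize (norm w / k) * k = t at h1 h2 h3 h4 hb
      omega
    exact_mod_cast Nat.cast_le.mpr hnorm
  · -- multiplicity at most 2
    intro x
    have hextract : ∀ U ∈ {U | U ∈ Set.range Pc ∧
        ∃ y ∈ U, (↑(norm (x⁻¹ * y)) : ℝ) ≤ r},
        ∃ y, U = Pc y ∧ norm (x⁻¹ * y) ≤ R := by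
      rintro U ⟨⟨w, rfl⟩, y, hyU, hdy⟩
      refine ⟨y, (hmem_eq y w hyU).symm, ?_⟩
      exact_mod_cast le_trans hdy hrR
    have hlevel : ∀ y : FreeGroup (Fin n), norm (x⁻¹ * y) ≤ R →
        norm y / k = (norm x - R) / k ∨ norm y / k = (norm x - R) / k + 1 := by
      intro y hdy
      have hxy : norm (y⁻¹ * x) = norm (x⁻¹ * y) := by
        rw [← norm_inv_eq (x := y⁻¹ * x)]
        congr 1
        group
      have nlow : norm x ≤ norm y + R := by
        have := norm_le_norm_add x y
        rw [hxy] at this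
        omega
      have nhigh : norm y ≤ norm x + R := by
        have := norm_le_norm_add y x
        omega
      have hlower : (norm x - R) / k ≤ norm y / k :=
        Nat.div_le_div_right (by omega)
      have hupper : norm y / k < (norm x - R) / k + 2 := by
        rw [Nat.div_lt_iff_lt_mul hk0, Nat.add_mul]
        have h1 := Nat.div_add_mod' (norm x - R) k
        have h2 := Nat.mod_lt (norm x - R) hk0
        omega
      omega
    have hsame : ∀ y z : FreeGroup (Fin n), norm (x⁻¹ * y) ≤ R → norm (x⁻¹ * z) ≤ R →
        norm y / k = norm z / k → Pc y = Pc z := by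
      intro y z hdy hdz hj
      have hdyz : norm (y⁻¹ * z) ≤ 2 * R := by
        have heq : y⁻¹ * z = (x⁻¹ * y)⁻¹ * (x⁻¹ * z) := by group
        have hmul := norm_mul_le (x⁻¹ * y)⁻¹ (x⁻¹ * z)
        rw [norm_inv_eq] at hmul
        rw [heq]
        omega
      refine hPc_eq y z hj ?_
      by_cases hj0 : norm z / k = 0
      · simp [hj0]
      · have hjk : k ≤ (norm z / k) * k :=
          Nat.le_mul_of_pos_left k (Nat.pos_of_ne_zero hj0)
        refine take_eq_of_close _ R y z ?_ ?_ hdyz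
        · have h5 := hlev_le y
          rw [hj] at h5
          omega
        · have h5 := hlev_le z
          omega
    have h3 : ∀ a ∈ {U | U ∈ Set.range Pc ∧ ∃ y ∈ U, (↑(norm (x⁻¹ * y)) : ℝ) ≤ r},
        ∀ b ∈ {U | U ∈ Set.range Pc ∧ ∃ y ∈ U, (↑(norm (x⁻¹ * y)) : ℝ) ≤ r},
        ∀ c ∈ {U | U ∈ Set.range Pc ∧ ∃ y ∈ U, (↑(norm (x⁻¹ * y)) : ℝ) ≤ r},
        a = b ∨ a = c ∨ b = c := by
      intro U1 h1 U2 h2 U3 h3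
      obtain ⟨y1, rfl, hd1⟩ := hextract _ h1
      obtain ⟨y2, rfl, hd2⟩ := hextract _ h2
      obtain ⟨y3, rfl, hd3⟩ := hextract _ h3
      have hl1 := hlevel y1 hd1
      have hl2 := hlevel y2 hd2
      have hl3 := hlevel y3 hd3
      have hcase : norm y1 / k = norm y2 / k ∨ norm y1 / k = norm y3 / k ∨
          norm y2 / k = norm y3 / k := by omega
      rcases hcase with h | h | h
      · exact Or.inl (hsame y1 y2 hd1 hd2 h)
      · exact Or.inr (Or.inl (hsame y1 y3 hd1 hd3 h))
      · exact Or.inr (Or.inr (hsame y2 y3 hd2 hd3 h))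
    have hfin := subset_pair_of_three _ h3
    exact ⟨hfin.1, le_trans hfin.2 (by norm_num)⟩

lemma part2 (n : ℕ) (hn : 1 ≤ n) :
    ¬ AsdimLE (fun g h : FreeGroup (Fin n) =>
      (FreeGroup.norm (g⁻¹ * h) : ℝ)) 0 := by
  intro h
  obtain ⟨𝒰, hcover, ⟨B, hB⟩, hmult⟩ := h 1 one_pos
  set a : FreeGroup (Fin n) := FreeGroup.of ⟨0, hn⟩ with ha
  obtain ⟨U₀, hU₀, h1⟩ := hcover 1
  have key : ∀ m : ℕ, a ^ m ∈ U₀ := by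
    intro m
    induction m with
    | zero => simpa using h1
    | succ m ih =>
      obtain ⟨V, hV, haV⟩ := hcover (a ^ (m + 1))
      obtain ⟨hfin, hcard⟩ := hmult (a ^ m)
      have hU₀S : U₀ ∈ {U | U ∈ 𝒰 ∧ ∃ y ∈ U, (FreeGroup.norm ((a ^ m)⁻¹ * y) : ℝ) ≤ 1} := by
        exact ⟨hU₀, a ^ m, ih, by simp⟩
      have hVS : V ∈ {U | U ∈ 𝒰 ∧ ∃ y ∈ U, (FreeGroup.norm ((a ^ m)⁻¹ * y) : ℝ) ≤ 1} := by
        refine ⟨hV, a ^ (m + 1), haV, ?_⟩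
        have : (a ^ m)⁻¹ * a ^ (m + 1) = a := by
          rw [pow_succ]; group
        rw [this, ha, FreeGroup.norm_of]
        norm_num
      have := (Set.ncard_le_one hfin).mp hcard U₀ hU₀S V hVS
      rw [this]; exact haV
  have hbound : ∀ m : ℕ, (m : ℝ) ≤ B := by
    intro m
    have := hB U₀ hU₀ 1 h1 (a ^ m) (key m)
    simpa [ha, FreeGroup.norm_of_pow] using this
  obtain ⟨m, hm⟩ := exists_nat_gt B
  exact absurd (hbound m) (not_le.mpr hm)


/-- The free group on `n ≥ 1` generators, with its word metric, has asymptotic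
dimension exactly `1`. -/
theorem asdim_freeGroup (n : ℕ) (hn : 1 ≤ n) :
    AsdimLE (fun g h : FreeGroup (Fin n) =>
      (wordLength (freeGens n) (g⁻¹ * h) : ℝ)) 1 ∧
    ¬ AsdimLE (fun g h : FreeGroup (Fin n) =>
      (wordLength (freeGens n) (g⁻¹ * h) : ℝ)) 0 := by
  have hfun : (fun g h : FreeGroup (Fin n) => ((wordLength (freeGens n) (g⁻¹ * h) : ℕ) : ℝ)) =
      (fun g h : FreeGroup (Fin n) => ((FreeGroup.norm (g⁻¹ * h) : ℕ) : ℝ)) := by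
    funext g h
    rw [wordLength_eq_norm]
  rw [hfun]
  exact ⟨part1 n, part2 n hn⟩
end

section
/- Asymptotic dimension is monotone under coarse embeddings (hence invariant under coarse equivalence): if X and Y are metric spaces, f : X → Y is a coarse embedding, and Y has asymptotic dimension at most n, then X has asymptotic dimension at most n. -/
open Filter

/-- Asymptotic dimension is monotone under coarse embeddings. -/
theorem asdimLE_of_coarse_embedding
    {X Y : Type*} [MetricSpace X] [MetricSpace Y] (f : X → Y)
    (ρ₁ ρ₂ : ℝ → ℝ) (hρ₁ : Monotone ρ₁) (hρ₂ : Monotone ρ₂)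
    (hρ : Tendsto ρ₁ atTop atTop)
    (hf : ∀ x y : X, ρ₁ (dist x y) ≤ dist (f x) (f y) ∧
      dist (f x) (f y) ≤ ρ₂ (dist x y))
    (n : ℕ) (hY : AsdimLE (fun a b : Y => dist a b) n) :
    AsdimLE (fun a b : X => dist a b) n := by
  intro r hr
  set r' : ℝ := max 1 (ρ₂ r) with hr'
  obtain ⟨𝒱, hcov, ⟨B, hB⟩, hmult⟩ := hY r' (lt_of_lt_of_le one_pos (le_max_left _ _))
  refine ⟨(fun V => f ⁻¹' V) '' 𝒱, ?_, ?_, ?_⟩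
  · intro x
    obtain ⟨V, hV, hxV⟩ := hcov (f x)
    exact ⟨f ⁻¹' V, ⟨V, hV, rfl⟩, hxV⟩
  · obtain ⟨S, hS⟩ := (tendsto_atTop_atTop.mp hρ) (B + 1)
    refine ⟨max S 0, ?_⟩
    rintro U ⟨V, hV, rfl⟩ x hx y hy
    by_contra hgt
    push_neg at hgt
    have h1 : B + 1 ≤ ρ₁ (dist x y) := hS _ (le_of_lt (lt_of_le_of_lt (le_max_left _ _) hgt))
    have h2 : ρ₁ (dist x y) ≤ dist (f x) (f y) := (hf x y).1
    have h3 : dist (f x) (f y) ≤ B := hB V hV _ hx _ hy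
    linarith
  · intro x
    have hsub : {U | U ∈ (fun V => f ⁻¹' V) '' 𝒱 ∧ ∃ y ∈ U, dist x y ≤ r} ⊆
        (fun V => f ⁻¹' V) '' {V | V ∈ 𝒱 ∧ ∃ z ∈ V, dist (f x) z ≤ r'} := by
      rintro U ⟨⟨V, hV, rfl⟩, y, hy, hdy⟩
      refine ⟨V, ⟨hV, f y, hy, ?_⟩, rfl⟩
      calc dist (f x) (f y) ≤ ρ₂ (dist x y) := (hf x y).2
        _ ≤ ρ₂ r := hρ₂ hdy
        _ ≤ r' := le_max_right _ _
    have hfin := (hmult (f x)).1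
    have hfin' : ((fun V => f ⁻¹' V) '' {V | V ∈ 𝒱 ∧ ∃ z ∈ V, dist (f x) z ≤ r'}).Finite :=
      hfin.image _
    refine ⟨hfin'.subset hsub, ?_⟩
    calc {U | U ∈ (fun V => f ⁻¹' V) '' 𝒱 ∧ ∃ y ∈ U, dist x y ≤ r}.ncard
        ≤ ((fun V => f ⁻¹' V) '' {V | V ∈ 𝒱 ∧ ∃ z ∈ V, dist (f x) z ≤ r'}).ncard :=
          Set.ncard_le_ncard hsub hfin'
      _ ≤ {V | V ∈ 𝒱 ∧ ∃ z ∈ V, dist (f x) z ≤ r'}.ncard := Set.ncard_image_le hfin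
      _ ≤ n + 1 := (hmult (f x)).2
end

section
/- Let G be a countable group with a proper length function l and associated left-invariant metric d_l. If the metric space (G, d_l) has finite asymptotic dimension, then there exists a coarse embedding of (G, d_l) into the Hilbert space ℓ²(ℕ). -/
/-!
At scale `2 ^ k` pick a cover `𝒰 k` by sets of diameter at most `B k` such that every ball of
radius `2 ^ k` meets at most `n + 1` of them, and use all the functions
`x ↦ max 0 (1 - d(x, U) / 2 ^ k)`, `U ∈ 𝒰 k`, as coordinates. Each is `2 ^ (-k)`-Lipschitz and
at most `2 (n + 1)` of them differ at two given points, so the squared distance of the images is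
at most `∑ₖ 2 (n + 1) (d / 2 ^ k) ^ 2 = O(d ^ 2)`. Conversely, at each scale with
`B k + 2 ^ k ≤ d(x, y)` the member of `𝒰 k` containing `x` gives a coordinate equal to `1` at `x`
and `0` at `y`, and the number of such scales grows without bound with `d(x, y)`. Since the space
is countable, so are the coordinates, and the map lands in `ℓ²(ℕ)`.
-/

open Filter Function Metric Set
open scoped ENNReal

def IsCoarseEmbedding {X Y : Type*} [PseudoMetricSpace X] [PseudoMetricSpace Y] (f : X → Y) :
    Prop :=
  ∃ ρ₁ ρ₂ : ℝ → ℝ, Monotone ρ₁ ∧ Monotone ρ₂ ∧ Tendsto ρ₁ atTop atTop ∧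
    ∀ x y, ρ₁ (dist x y) ≤ dist (f x) (f y) ∧ dist (f x) (f y) ≤ ρ₂ (dist x y)

section Sums

variable {ι : Type*}

lemma tsum_le_of_support_subset {f : ι → ℝ} {s : Set ι} (hs : s.Finite) (hf : support f ⊆ s)
    {N : ℕ} (hN : s.ncard ≤ N) {c : ℝ} (hc : 0 ≤ c) (hfc : ∀ i, f i ≤ c) :
    ∑' i, f i ≤ N * c := by
  rw [tsum_eq_sum (s := hs.toFinset) fun i hi ↦
    notMem_support.1 fun h ↦ hi (hs.mem_toFinset.2 (hf h))]
  calc ∑ i ∈ hs.toFinset, f i ≤ hs.toFinset.card • c :=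
        Finset.sum_le_card_nsmul _ _ _ fun i _ ↦ hfc i
    _ = s.ncard * c := by rw [nsmul_eq_mul, ncard_eq_toFinset_card _ hs]
    _ ≤ N * c := by gcongr

lemma ncard_le_tsum_of_injective {α : Type*} {f : ι → ℝ} (hf : Summable f) (hf0 : ∀ i, 0 ≤ f i)
    {e : α → ι} (he : Injective e) {s : Set α} (hs : s.Finite) (h1 : ∀ a ∈ s, 1 ≤ f (e a)) :
    (s.ncard : ℝ) ≤ ∑' i, f i :=
  calc (s.ncard : ℝ) = ∑ _ ∈ hs.toFinset, (1 : ℝ) := by simp [ncard_eq_toFinset_card _ hs]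
    _ ≤ ∑ a ∈ hs.toFinset, f (e a) := Finset.sum_le_sum fun a ha ↦ h1 a (hs.mem_toFinset.1 ha)
    _ ≤ ∑' a, f (e a) := (hf.comp_injective he).sum_le_tsum _ fun a _ ↦ hf0 _
    _ ≤ ∑' i, f i := tsum_comp_le_tsum_of_inj hf hf0 he

variable {β : ι → Type*} {f : (Σ i, β i) → ℝ} {g : ι → ℝ}

lemma summable_sigma_of_tsum_le (hf : ∀ p, 0 ≤ f p) (hg : Summable g)
    (hfib : ∀ i, Summable fun b ↦ f ⟨i, b⟩) (hle : ∀ i, ∑' b, f ⟨i, b⟩ ≤ g i) : Summable f :=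
  (summable_sigma_of_nonneg hf).2 ⟨hfib, hg.of_nonneg_of_le (fun _ ↦ tsum_nonneg fun _ ↦ hf _) hle⟩

lemma tsum_sigma_le_of_tsum_le (hf : ∀ p, 0 ≤ f p) (hg : Summable g)
    (hfib : ∀ i, Summable fun b ↦ f ⟨i, b⟩) (hle : ∀ i, ∑' b, f ⟨i, b⟩ ≤ g i) :
    ∑' p, f p ≤ ∑' i, g i := by
  rw [(summable_sigma_of_tsum_le hf hg hfib hle).tsum_sigma]
  exact (hg.of_nonneg_of_le (fun _ ↦ tsum_nonneg fun _ ↦ hf _) hle).tsum_le_tsum hle hg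

end Sums

lemma finite_setOf_le_of_tendsto {S : ℕ → ℝ} (hS : Tendsto S atTop atTop) (t : ℝ) :
    {k | S k ≤ t}.Finite := by
  simpa [← Nat.cofinite_eq_atTop] using hS.eventually_gt_atTop t

lemma tendsto_ncard_setOf_le {S : ℕ → ℝ} (hS : Tendsto S atTop atTop) :
    Tendsto (fun t : ℝ ↦ {k | S k ≤ t}.ncard) atTop atTop := by
  refine tendsto_atTop.2 fun m ↦ ?_
  filter_upwards [(Finset.range m).eventually_all.2 fun k _ ↦ eventually_ge_atTop (S k)] with t ht
  calc m = (Finset.range m : Set ℕ).ncard := by simp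
    _ ≤ {k | S k ≤ t}.ncard := ncard_le_ncard (fun k hk ↦ ht k hk) (finite_setOf_le_of_tendsto hS t)

lemma isCoarseEmbedding_of_sq_dist_bounds {X Y : Type*} [PseudoMetricSpace X]
    [PseudoMetricSpace Y] {f : X → Y} {S : ℕ → ℝ} (hS : Tendsto S atTop atTop) {C : ℝ}
    (hC : 0 ≤ C) (hlower : ∀ x y, ({k | S k ≤ dist x y}.ncard : ℝ) ≤ dist (f x) (f y) ^ 2)
    (hupper : ∀ x y, dist (f x) (f y) ^ 2 ≤ C * dist x y ^ 2) : IsCoarseEmbedding f := by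
  refine ⟨fun t ↦ √({k | S k ≤ t}.ncard : ℝ), fun t ↦ √C * t, fun a b hab ↦ ?_,
    monotone_id.const_mul (Real.sqrt_nonneg C),
    Real.tendsto_sqrt_atTop.comp (tendsto_natCast_atTop_atTop.comp (tendsto_ncard_setOf_le hS)),
    fun x y ↦ ⟨?_, ?_⟩⟩
  · exact Real.sqrt_le_sqrt <| by
      exact_mod_cast ncard_le_ncard (fun k (hk : S k ≤ a) ↦ hk.trans hab)
        (finite_setOf_le_of_tendsto hS b)
  · exact (Real.sqrt_le_sqrt (hlower x y)).trans_eq (Real.sqrt_sq dist_nonneg)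
  · calc dist (f x) (f y) ≤ √(C * dist x y ^ 2) := Real.le_sqrt_of_sq_le (hupper x y)
      _ = √C * dist x y := by rw [Real.sqrt_mul hC, Real.sqrt_sq dist_nonneg]

lemma exists_lp_nat_dist_sq_eq_tsum {X ι : Type*} [Countable ι] (F : X → ι → ℝ)
    (hF : ∀ x y, Summable fun i ↦ (F x i - F y i) ^ 2) :
    ∃ f : X → lp (fun _ : ℕ ↦ ℝ) 2, ∀ x y, dist (f x) (f y) ^ 2 = ∑' i, (F x i - F y i) ^ 2 := by
  rcases isEmpty_or_nonempty X with hX | ⟨⟨x₀⟩⟩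
  · exact ⟨isEmptyElim, isEmptyElim⟩
  obtain ⟨e, he⟩ := exists_injective_nat ι
  -- subtracting `F x₀` makes every `G x` square-summable
  set G : X → ℕ → ℝ := fun x ↦ extend e (F x - F x₀) 0
  have hG : ∀ x y m, ‖G x m - G y m‖ ^ (2 : ℝ≥0∞).toReal =
      extend e (fun i ↦ (F x i - F y i) ^ 2) 0 m := by
    intro x y m
    rw [ENNReal.toReal_ofNat, Real.rpow_two, Real.norm_eq_abs, sq_abs]
    by_cases hm : ∃ i, e i = m
    · obtain ⟨i, rfl⟩ := hm
      simp [G, he.extend_apply]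
    · simp [G, extend_apply' _ _ _ hm]
  have hmem : ∀ x, Memℓp (G x) 2 := fun x ↦ by
    have hG₀ : G x₀ = 0 := by simp [G, extend_zero]
    refine (memℓp_gen_iff (by norm_num)).2 ?_
    convert (summable_extend_zero he).2 (hF x x₀) using 2 with m
    rw [← hG, hG₀, Pi.zero_apply, sub_zero]
  refine ⟨fun x ↦ ⟨G x, hmem x⟩, fun x y ↦ ?_⟩
  rw [dist_eq_norm, ← tsum_extend_zero he, ← Real.rpow_two, ← ENNReal.toReal_ofNat,
    lp.norm_rpow_eq_tsum (by norm_num)]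
  exact tsum_congr fun m ↦ hG x y m

section Bump

variable {X : Type*} [PseudoMetricSpace X] {r : ℝ} {U : Set X} {x y : X}

noncomputable def bump (r : ℝ) (U : Set X) (x : X) : ℝ := max 0 (1 - infDist x U / r)

lemma bump_eq_one_of_mem (hx : x ∈ U) : bump r U x = 1 := by
  simp [bump, infDist_zero_of_mem hx]

lemma bump_eq_zero_of_le_infDist (hr : 0 < r) (h : r ≤ infDist x U) : bump r U x = 0 :=
  max_eq_left <| sub_nonpos.2 <| (one_le_div hr).2 h

lemma abs_bump_sub_le (hr : 0 < r) : |bump r U x - bump r U y| ≤ dist x y / r :=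
  calc |bump r U x - bump r U y| ≤ |(1 - infDist x U / r) - (1 - infDist y U / r)| := by
        simpa only [bump, max_comm (0 : ℝ)] using abs_max_sub_max_le_abs _ _ 0
    _ = |infDist x U - infDist y U| / r := by
        rw [show 1 - infDist x U / r - (1 - infDist y U / r) = (infDist y U - infDist x U) / r by
          ring, abs_div, abs_of_pos hr, abs_sub_comm]
    _ ≤ dist x y / r := by
        gcongr
        simpa [Real.dist_eq] using (lipschitz_infDist_pt U).dist_le_mul x y

lemma exists_dist_lt_of_bump_ne (hr : 0 < r) (h : bump r U x ≠ bump r U y) :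
    (∃ z ∈ U, dist x z < r) ∨ ∃ z ∈ U, dist y z < r := by
  rcases U.eq_empty_or_nonempty with rfl | hU
  · simp [bump] at h
  by_contra! hfar
  exact h <| by rw [bump_eq_zero_of_le_infDist hr ((le_infDist hU).2 hfar.1),
    bump_eq_zero_of_le_infDist hr ((le_infDist hU).2 hfar.2)]

lemma sq_bump_sub_eq_one {B : ℝ} (hr : 0 < r) (hx : x ∈ U) (hU : ∀ z ∈ U, dist x z ≤ B)
    (hxy : B + r ≤ dist x y) : (bump r U x - bump r U y) ^ 2 = 1 := by
  have hy : r ≤ infDist y U := (le_infDist ⟨x, hx⟩).2 fun z hz ↦ by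
    linarith [hU z hz, dist_triangle x z y, dist_comm z y]
  rw [bump_eq_one_of_mem hx, bump_eq_zero_of_le_infDist hr hy]
  norm_num

end Bump

section Cover

variable {X : Type*} [PseudoMetricSpace X] {𝒰 : Set (Set X)} {r : ℝ}

def membersNear (𝒰 : Set (Set X)) (r : ℝ) (x : X) : Set (Set X) :=
  {U | U ∈ 𝒰 ∧ ∃ y ∈ U, dist x y ≤ r}

lemma countable_of_finite_membersNear [Countable X] (hr : 0 ≤ r)
    (h : ∀ x, (membersNear 𝒰 r x).Finite) : 𝒰.Countable := by
  refine ((countable_singleton ∅).union (countable_iUnion fun x ↦ (h x).countable)).mono ?_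
  intro U hU
  rcases U.eq_empty_or_nonempty with rfl | ⟨z, hz⟩
  · exact Or.inl rfl
  · exact Or.inr <| mem_iUnion.2 ⟨z, hU, z, hz, by simpa using hr⟩

lemma support_sq_bump_sub_subset (hr : 0 < r) (x y : X) :
    support (fun U : 𝒰 ↦ (bump r U x - bump r U y) ^ 2) ⊆
      Subtype.val ⁻¹' (membersNear 𝒰 r x ∪ membersNear 𝒰 r y) := by
  intro U hU
  have hne : bump r U x ≠ bump r U y := fun h ↦ hU (by simp [h])
  rcases exists_dist_lt_of_bump_ne hr hne with ⟨z, hz, hxz⟩ | ⟨z, hz, hyz⟩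
  exacts [Or.inl ⟨U.2, z, hz, hxz.le⟩, Or.inr ⟨U.2, z, hz, hyz.le⟩]

variable (hfin : ∀ x, (membersNear 𝒰 r x).Finite)
include hfin

lemma summable_sq_bump_sub (hr : 0 < r) (x y : X) :
    Summable fun U : 𝒰 ↦ (bump r U x - bump r U y) ^ 2 :=
  summable_of_hasFiniteSupport <| (((hfin x).union (hfin y)).preimage
    Subtype.val_injective.injOn).subset (support_sq_bump_sub_subset hr x y)

lemma tsum_sq_bump_sub_le {N : ℕ} (hcard : ∀ x, (membersNear 𝒰 r x).ncard ≤ N) (hr : 0 < r)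
    (x y : X) : ∑' U : 𝒰, (bump r U x - bump r U y) ^ 2 ≤ 2 * N * (dist x y / r) ^ 2 := by
  have hunion := (hfin x).union (hfin y)
  have hN : (Subtype.val ⁻¹' (membersNear 𝒰 r x ∪ membersNear 𝒰 r y) : Set 𝒰).ncard ≤ 2 * N :=
    (ncard_le_ncard_of_injOn Subtype.val (fun _ h ↦ h) Subtype.val_injective.injOn hunion).trans <|
      (ncard_union_le _ _).trans (by linarith [hcard x, hcard y])
  have := tsum_le_of_support_subset (hunion.preimage Subtype.val_injective.injOn)
    (support_sq_bump_sub_subset hr x y) hN (sq_nonneg (dist x y / r)) fun U ↦ by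
      rw [← sq_abs]
      exact pow_le_pow_left₀ (abs_nonneg _) (abs_bump_sub_le hr) 2
  simpa [mul_assoc] using this

end Cover

lemma hasSum_sq_div_two_pow (N : ℕ) (t : ℝ) :
    HasSum (fun k : ℕ ↦ 2 * N * (t / 2 ^ k) ^ 2) (8 * N / 3 * t ^ 2) := by
  have hk (k : ℕ) : 2 * N * (t / 2 ^ k) ^ 2 = 2 * N * t ^ 2 * (1 / 4) ^ k := by
    rw [div_pow, ← pow_mul, mul_comm k 2, pow_mul, one_div_pow]
    norm_num
    ring
  rw [funext hk, show 8 * N / 3 * t ^ 2 = 2 * N * t ^ 2 * (1 - 1 / 4)⁻¹ by norm_num; ring]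
  exact (hasSum_geometric_of_lt_one (by norm_num) (by norm_num)).mul_left _

section Multiscale

variable {X : Type*} [PseudoMetricSpace X] {𝒰 : ℕ → Set (Set X)} {N : ℕ}

noncomputable def scaledBump (𝒰 : ℕ → Set (Set X)) (i : Σ k, 𝒰 k) (x : X) : ℝ :=
  bump (2 ^ i.1) i.2 x

variable (hfin : ∀ k x, (membersNear (𝒰 k) (2 ^ k) x).Finite)
include hfin

lemma summable_sq_scaledBump_sub (hcard : ∀ k x, (membersNear (𝒰 k) (2 ^ k) x).ncard ≤ N)
    (x y : X) :
    Summable fun i ↦ (scaledBump 𝒰 i x - scaledBump 𝒰 i y) ^ 2 :=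
  summable_sigma_of_tsum_le (fun _ ↦ sq_nonneg _) (hasSum_sq_div_two_pow N (dist x y)).summable
    (fun k ↦ summable_sq_bump_sub (hfin k) (by positivity) x y)
    fun k ↦ tsum_sq_bump_sub_le (hfin k) (hcard k) (by positivity) x y

lemma tsum_sq_scaledBump_sub_le (hcard : ∀ k x, (membersNear (𝒰 k) (2 ^ k) x).ncard ≤ N)
    (x y : X) :
    ∑' i, (scaledBump 𝒰 i x - scaledBump 𝒰 i y) ^ 2 ≤
      8 * N / 3 * dist x y ^ 2 :=
  (hasSum_sq_div_two_pow N (dist x y)).tsum_eq ▸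
    tsum_sigma_le_of_tsum_le (fun _ ↦ sq_nonneg _) (hasSum_sq_div_two_pow N (dist x y)).summable
      (fun k ↦ summable_sq_bump_sub (hfin k) (by positivity) x y)
      fun k ↦ tsum_sq_bump_sub_le (hfin k) (hcard k) (by positivity) x y

end Multiscale

theorem exists_isCoarseEmbedding_lp_of_asdimLE {X : Type*} [PseudoMetricSpace X] [Countable X]
    {n : ℕ} (h : AsdimLE (dist : X → X → ℝ) n) :
    ∃ f : X → lp (fun _ : ℕ ↦ ℝ) 2, IsCoarseEmbedding f := by
  choose 𝒰 hcover hbdd hmult using fun k : ℕ ↦ h (2 ^ k) (by positivity)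
  choose B hB using hbdd
  choose V hV hxV using hcover
  have hfin k x : (membersNear (𝒰 k) (2 ^ k) x).Finite := (hmult k x).1
  have hcard k x : (membersNear (𝒰 k) (2 ^ k) x).ncard ≤ n + 1 := (hmult k x).2
  have (k : ℕ) : Countable (𝒰 k) :=
    (countable_of_finite_membersNear (by positivity) (hfin k)).to_subtype
  obtain ⟨f, hf⟩ := exists_lp_nat_dist_sq_eq_tsum (fun x i ↦ scaledBump 𝒰 i x)
    (summable_sq_scaledBump_sub hfin hcard)
  -- at each scale `k` with `S k ≤ dist x y`, the member of `𝒰 k` containing `x` separates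
  -- `x` from `y`
  set S : ℕ → ℝ := fun k ↦ max (B k) 0 + 2 ^ k
  have hS : Tendsto S atTop atTop :=
    tendsto_atTop_mono (fun k ↦ le_add_of_nonneg_left (le_max_right _ _))
      (tendsto_pow_atTop_atTop_of_one_lt one_lt_two)
  refine ⟨f, isCoarseEmbedding_of_sq_dist_bounds hS (by positivity)
    (fun x y ↦ ?_) fun x y ↦ (hf x y).trans_le (tsum_sq_scaledBump_sub_le hfin hcard x y)⟩
  rw [hf]
  refine ncard_le_tsum_of_injective (summable_sq_scaledBump_sub hfin hcard x y)
    (fun _ ↦ sq_nonneg _) (e := fun k ↦ ⟨k, V k x, hV k x⟩) (fun a b hab ↦ congrArg Sigma.fst hab)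
    (finite_setOf_le_of_tendsto hS _) fun k hk ↦ ?_
  refine (sq_bump_sub_eq_one (by positivity) (hxV k x) (fun z hz ↦ ?_) hk).ge
  exact (hB k _ (hV k x) x (hxV k x) z hz).trans (le_max_left _ _)

abbrev PseudoMetricSpace.ofLength {G : Type*} [Group G] (l : G → ℝ) (hl1 : l 1 = 0)
    (hlinv : ∀ g : G, l g⁻¹ = l g) (hlsub : ∀ g h : G, l (g * h) ≤ l g + l h) :
    PseudoMetricSpace G where
  dist g h := l (g⁻¹ * h)
  dist_self g := by simpa using hl1
  dist_comm g h := by rw [← hlinv, mul_inv_rev, inv_inv]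
  dist_triangle g h k := by simpa [mul_assoc] using hlsub (g⁻¹ * h) (h⁻¹ * k)

theorem coarse_embedding_into_l2_of_finite_asdim_general
    (G : Type*) [Group G] [Countable G] (l : G → ℝ)
    (hlinv : ∀ g : G, l g⁻¹ = l g)
    (hlsub : ∀ g h : G, l (g * h) ≤ l g + l h)
    (hlzero : ∀ g : G, l g = 0 ↔ g = 1)
    (hasdim : ∃ n : ℕ, AsdimLE (fun g h : G => l (g⁻¹ * h)) n) :
    ∃ f : G → lp (fun _ : ℕ => ℝ) 2, ∃ ρ₁ ρ₂ : ℝ → ℝ,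
      Monotone ρ₁ ∧ Monotone ρ₂ ∧ Tendsto ρ₁ atTop atTop ∧
      ∀ g h : G, ρ₁ (l (g⁻¹ * h)) ≤ dist (f g) (f h) ∧
        dist (f g) (f h) ≤ ρ₂ (l (g⁻¹ * h)) := by
  obtain ⟨n, hn⟩ := hasdim
  let := PseudoMetricSpace.ofLength l ((hlzero 1).2 rfl) hlinv hlsub
  exact exists_isCoarseEmbedding_lp_of_asdimLE hn

/-- A countable group with a proper length metric of finite asymptotic dimension
coarsely embeds into the Hilbert space `ℓ²(ℕ)`. -/
theorem coarse_embedding_into_l2_of_finite_asdim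
    (G : Type*) [Group G] [Countable G] (l : G → ℝ)
    (hl0 : ∀ g : G, 0 ≤ l g) (hlinv : ∀ g : G, l g⁻¹ = l g)
    (hlsub : ∀ g h : G, l (g * h) ≤ l g + l h)
    (hlzero : ∀ g : G, l g = 0 ↔ g = 1)
    (hlproper : ∀ R : ℝ, 0 < R → {g : G | l g ≤ R}.Finite)
    (hasdim : ∃ n : ℕ, AsdimLE (fun g h : G => l (g⁻¹ * h)) n) :
    ∃ f : G → lp (fun _ : ℕ => ℝ) 2, ∃ ρ₁ ρ₂ : ℝ → ℝ,
      Monotone ρ₁ ∧ Monotone ρ₂ ∧ Tendsto ρ₁ atTop atTop ∧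
      ∀ g h : G, ρ₁ (l (g⁻¹ * h)) ≤ dist (f g) (f h) ∧
        dist (f g) (f h) ≤ ρ₂ (l (g⁻¹ * h)) :=
  coarse_embedding_into_l2_of_finite_asdim_general G l hlinv hlsub hlzero hasdim
end

section
/- Every countable group admits a coarse embedding into c₀: if G is a countable group with a proper length function l and associated left-invariant metric d_l, then there exists a coarse embedding of (G, d_l) into the Banach space c₀ of real sequences converging to 0, equipped with the supremum norm. -/
/-!
Fix a base point `o` and send a point `y` to the family, indexed by the points `x` (injected
into `ℕ`), of the tents `max 0 (d(o, x) / 2 - d(x, y))`. Each coordinate is `1`-Lipschitz in `y`,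
so the map is `1`-Lipschitz into the sup norm. A coordinate of `y` can only be nonzero at `x`
with `d(o, x) < 2 d(o, y)`, so when balls are finite the image of `y` is finitely supported and
lies in `c₀`. Finally, if `d(o, x) ≤ d(o, y)`, the coordinate at `y` alone separates the
images of `x` and `y` by at least `d(x, y) / 4`.
-/

open Filter Function Metric
open scoped ZeroAtInfty

namespace ZeroAtInftyContinuousMap

variable {α β : Type*} [TopologicalSpace α]

section Dist

variable [PseudoMetricSpace β] [Zero β]

theorem dist_apply_le_dist (f g : C₀(α, β)) (x : α) : dist (f x) (g x) ≤ dist f g := by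
  rw [← dist_toBCF_eq_dist]
  exact BoundedContinuousFunction.dist_coe_le_dist (f := f.toBCF) (g := g.toBCF) x

theorem dist_le {f g : C₀(α, β)} {C : ℝ} (hC : 0 ≤ C) :
    dist f g ≤ C ↔ ∀ x, dist (f x) (g x) ≤ C := by
  rw [← dist_toBCF_eq_dist]
  exact BoundedContinuousFunction.dist_le hC

end Dist

variable [DiscreteTopology α] [TopologicalSpace β] [Zero β]

noncomputable def ofFinsupp (v : α →₀ β) : C₀(α, β) where
  toFun := v
  continuous_toFun := continuous_of_discreteTopology
  zero_at_infty' := by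
    rw [cocompact_eq_cofinite]
    refine tendsto_const_nhds.congr' ?_
    filter_upwards [v.support.eventually_cofinite_notMem] with a ha
    exact (Finsupp.notMem_support_iff.mp ha).symm

@[simp]
theorem ofFinsupp_apply (v : α →₀ β) (a : α) : ofFinsupp v a = v a := rfl

end ZeroAtInftyContinuousMap

theorem Finsupp.dist_embDomain_apply_le {α β M : Type*} [PseudoMetricSpace M] [Zero M]
    (ι : α ↪ β) {u v : α →₀ M} {C : ℝ} (hC : 0 ≤ C)
    (h : ∀ a, dist (u a) (v a) ≤ C) (b : β) :
    dist (embDomain ι u b) (embDomain ι v b) ≤ C := by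
  by_cases hb : b ∈ Set.range ι
  · obtain ⟨a, rfl⟩ := hb
    simpa only [embDomain_apply_self] using h a
  · simpa only [embDomain_of_notMem_range _ _ _ hb, dist_self] using hC

namespace Metric

variable {X : Type*} [PseudoMetricSpace X]

noncomputable def tent (o y x : X) : ℝ := max 0 (dist o x / 2 - dist x y)

theorem abs_tent_sub_tent_le (o y z x : X) : |tent o y x - tent o z x| ≤ dist y z := by
  calc |tent o y x - tent o z x|
      ≤ |(dist o x / 2 - dist x y) - (dist o x / 2 - dist x z)| := by
        simpa only [tent, max_comm (0 : ℝ)] using abs_max_sub_max_le_abs _ _ (0 : ℝ)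
    _ = |dist z x - dist y x| := by rw [dist_comm x y, dist_comm x z]; congr 1; ring
    _ ≤ dist z y := abs_dist_sub_le z y x
    _ = dist y z := dist_comm z y

theorem tent_self (o y : X) : tent o y y = dist o y / 2 := by
  simp only [tent, dist_self, sub_zero]
  exact max_eq_right (by positivity)

theorem support_tent_subset (o y : X) : support (tent o y) ⊆ closedBall o (2 * dist y o) := by
  intro x hx
  have hpos : dist x y < dist o x / 2 := by
    by_contra! h
    exact hx (max_eq_left (by linarith))
  rw [mem_closedBall]
  linarith [dist_triangle x y o, dist_comm o x]

theorem dist_div_four_le_abs_tent_sub {o x y : X} (hxy : dist x o ≤ dist y o) :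
    dist x y / 4 ≤ |tent o y y - tent o x y| := by
  have hle : dist x y ≤ 2 * dist o y := by
    linarith [dist_triangle x o y, dist_comm x o, dist_comm y o]
  rw [tent_self, tent, dist_comm y x]
  rcases le_total (dist o y / 2 - dist x y) 0 with h | h
  · rw [max_eq_left h, sub_zero, abs_of_nonneg (by positivity)]
    linarith
  · rw [max_eq_right h, sub_sub_cancel, abs_of_nonneg dist_nonneg]
    linarith [dist_nonneg (x := x) (y := y)]

variable (ι : X ↪ ℕ) (o : X) (hfin : ∀ r, (closedBall o r).Finite)

noncomputable def tentEmbedding (y : X) : C₀(ℕ, ℝ) :=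
  .ofFinsupp <| Finsupp.embDomain ι <|
    Finsupp.ofSupportFinite (tent o y) ((hfin _).subset (support_tent_subset o y))

theorem tentEmbedding_apply_self (y x : X) : tentEmbedding ι o hfin y (ι x) = tent o y x := by
  simp [tentEmbedding, Finsupp.ofSupportFinite_coe]

theorem dist_tentEmbedding_le (y z : X) :
    dist (tentEmbedding ι o hfin y) (tentEmbedding ι o hfin z) ≤ dist y z := by
  refine (ZeroAtInftyContinuousMap.dist_le dist_nonneg).2
    (Finsupp.dist_embDomain_apply_le ι dist_nonneg fun x => ?_)
  simpa [Finsupp.ofSupportFinite_coe, Real.dist_eq] using abs_tent_sub_tent_le o y z x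

theorem div_four_le_dist_tentEmbedding (y z : X) :
    dist y z / 4 ≤ dist (tentEmbedding ι o hfin y) (tentEmbedding ι o hfin z) := by
  wlog h : dist y o ≤ dist z o generalizing y z
  · rw [dist_comm y z, dist_comm (tentEmbedding ι o hfin y)]
    exact this z y (le_of_not_ge h)
  calc dist y z / 4 ≤ |tent o z z - tent o y z| := dist_div_four_le_abs_tent_sub h
    _ = dist (tentEmbedding ι o hfin z (ι z)) (tentEmbedding ι o hfin y (ι z)) := by
      rw [tentEmbedding_apply_self, tentEmbedding_apply_self, Real.dist_eq]
    _ ≤ dist (tentEmbedding ι o hfin z) (tentEmbedding ι o hfin y) :=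
      ZeroAtInftyContinuousMap.dist_apply_le_dist _ _ _
    _ = dist (tentEmbedding ι o hfin y) (tentEmbedding ι o hfin z) := dist_comm _ _

end Metric

abbrev lengthPseudoMetricSpace {G : Type*} [Group G] (l : G → ℝ) (hl1 : l 1 = 0)
    (hlinv : ∀ g : G, l g⁻¹ = l g) (hlsub : ∀ g h : G, l (g * h) ≤ l g + l h) :
    PseudoMetricSpace G where
  dist g h := l (g⁻¹ * h)
  dist_self g := by simpa only [inv_mul_cancel] using hl1
  dist_comm g h := by rw [← hlinv, mul_inv_rev, inv_inv]
  dist_triangle g h k := by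
    simpa only [mul_assoc, mul_inv_cancel_left] using hlsub (g⁻¹ * h) (h⁻¹ * k)

theorem coarse_embedding_into_c0_general
    (G : Type*) [Group G] [Countable G] (l : G → ℝ)
    (hlinv : ∀ g : G, l g⁻¹ = l g)
    (hlsub : ∀ g h : G, l (g * h) ≤ l g + l h)
    (hlzero : ∀ g : G, l g = 0 ↔ g = 1)
    (hlproper : ∀ R : ℝ, 0 < R → {g : G | l g ≤ R}.Finite) :
    ∃ f : G → ZeroAtInftyContinuousMap ℕ ℝ, ∃ ρ₁ ρ₂ : ℝ → ℝ,
      Monotone ρ₁ ∧ Monotone ρ₂ ∧ Tendsto ρ₁ atTop atTop ∧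
      ∀ g h : G, ρ₁ (l (g⁻¹ * h)) ≤ dist (f g) (f h) ∧
        dist (f g) (f h) ≤ ρ₂ (l (g⁻¹ * h)) := by
  let := lengthPseudoMetricSpace l ((hlzero 1).2 rfl) hlinv hlsub
  obtain ⟨ι, hι⟩ := exists_injective_nat G
  have hball (r : ℝ) : (closedBall (1 : G) r).Finite := by
    refine (hlproper (max r 1) (one_pos.trans_le (le_max_right r 1))).subset fun g hg => ?_
    change l (g⁻¹ * 1) ≤ r at hg
    rw [mul_one, hlinv] at hg
    exact hg.trans (le_max_left r 1)
  exact ⟨tentEmbedding ⟨ι, hι⟩ 1 hball, (· / 4), id, fun _ _ h => by linarith, monotone_id,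
    tendsto_id.atTop_div_const (by norm_num), fun g h =>
      ⟨div_four_le_dist_tentEmbedding _ _ hball g h, dist_tentEmbedding_le _ _ hball g h⟩⟩

/-- Every countable group with a proper length metric coarsely embeds into the
Banach space `c₀` of real sequences converging to `0`, with the sup norm
(formalized as the zero-at-infinity continuous maps `C₀(ℕ, ℝ)`). -/
theorem coarse_embedding_into_c0
    (G : Type*) [Group G] [Countable G] (l : G → ℝ)
    (hl0 : ∀ g : G, 0 ≤ l g) (hlinv : ∀ g : G, l g⁻¹ = l g)
    (hlsub : ∀ g h : G, l (g * h) ≤ l g + l h)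
    (hlzero : ∀ g : G, l g = 0 ↔ g = 1)
    (hlproper : ∀ R : ℝ, 0 < R → {g : G | l g ≤ R}.Finite) :
    ∃ f : G → ZeroAtInftyContinuousMap ℕ ℝ, ∃ ρ₁ ρ₂ : ℝ → ℝ,
      Monotone ρ₁ ∧ Monotone ρ₂ ∧ Tendsto ρ₁ atTop atTop ∧
      ∀ g h : G, ρ₁ (l (g⁻¹ * h)) ≤ dist (f g) (f h) ∧
        dist (f g) (f h) ≤ ρ₂ (l (g⁻¹ * h)) :=
  coarse_embedding_into_c0_general G l hlinv hlsub hlzero hlproper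
end

section
/- Let 1 ≤ p < ∞. The Mazur map ψ, defined coordinatewise by ψ(c)_k = c_k·|c_k|^{p/2−1}, is uniformly continuous as a map from the unit sphere of ℓ^p(ℕ) (with the ℓ^p metric) to ℓ²(ℕ). -/
/-!
Write `ψ` coordinatewise as `φ_q(x) = x|x|^(q-1)` with `q = p/2`. For `q ≤ 1`, `φ_q` is
`q`-Hölder with constant `2`, so `‖ψc - ψd‖₂² ≤ 4‖c - d‖ₚᵖ`. For `q > 1` the mean value theorem
gives `|φ_q(a) - φ_q(b)| ≤ q max(|a|,|b|)^(q-1) |a - b|`, and Hölder's inequality with exponents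
`p/2` and `p/(p-2)` bounds `‖ψc - ψd‖₂²` by `(p²/4) ‖c - d‖ₚ² ‖max(|c|,|d|)‖ₚ^(p-2)`, which is at
most `(p²/2) ‖c - d‖ₚ²` on the unit sphere. Either way `ψ` is Hölder continuous on the sphere.
-/

open Real

namespace Real

lemma rpow_le_abs_sub_rpow_add_rpow {q : ℝ} (hq0 : 0 ≤ q) (hq1 : q ≤ 1) {x y : ℝ}
    (hx : 0 ≤ x) (hy : 0 ≤ y) : x ^ q ≤ |x - y| ^ q + y ^ q :=
  calc x ^ q ≤ (|x - y| + y) ^ q :=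
        rpow_le_rpow hx (by linarith [le_abs_self (x - y)]) hq0
    _ ≤ |x - y| ^ q + y ^ q := rpow_add_le_add_rpow (abs_nonneg _) hy hq0 hq1

lemma abs_rpow_sub_rpow_le {q : ℝ} (hq0 : 0 ≤ q) (hq1 : q ≤ 1) {x y : ℝ}
    (hx : 0 ≤ x) (hy : 0 ≤ y) : |x ^ q - y ^ q| ≤ |x - y| ^ q := by
  have hxy := rpow_le_abs_sub_rpow_add_rpow hq0 hq1 hx hy
  have hyx := rpow_le_abs_sub_rpow_add_rpow hq0 hq1 hy hx
  rw [abs_sub_comm] at hyx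
  exact abs_sub_le_iff.2 ⟨by linarith, by linarith⟩

lemma abs_rpow_sub_rpow_le_mul {q : ℝ} (hq : 1 ≤ q) {x y : ℝ} (hx : 0 ≤ x) (hy : 0 ≤ y) :
    |x ^ q - y ^ q| ≤ q * max x y ^ (q - 1) * |x - y| := by
  have hderiv : ∀ z ∈ Set.Icc 0 (max x y),
      HasDerivWithinAt (fun z : ℝ => z ^ q) (q * z ^ (q - 1)) (Set.Icc 0 (max x y)) z :=
    fun z _ => (hasDerivAt_rpow_const (Or.inr hq)).hasDerivWithinAt
  have hbound : ∀ z ∈ Set.Icc 0 (max x y), ‖q * z ^ (q - 1)‖ ≤ q * max x y ^ (q - 1) := by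
    rintro z ⟨hz0, hzM⟩
    rw [norm_of_nonneg (by positivity)]
    gcongr
  exact (convex_Icc 0 (max x y)).norm_image_sub_le_of_norm_hasDerivWithin_le hderiv hbound
    ⟨hy, le_max_right x y⟩ ⟨hx, le_max_left x y⟩

lemma rpow_le_mul_rpow_sub_one {q : ℝ} (hq : 1 ≤ q) {x M : ℝ} (hx : 0 ≤ x) (hxM : x ≤ M) :
    x ^ q ≤ x * M ^ (q - 1) := by
  calc x ^ q = x * x ^ (q - 1) := by
        rw [← rpow_one_add' hx (by linarith), add_sub_cancel]
    _ ≤ x * M ^ (q - 1) := by gcongr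

lemma max_rpow_le_rpow_add_rpow {q x y : ℝ} (hx : 0 ≤ x) (hy : 0 ≤ y) :
    max x y ^ q ≤ x ^ q + y ^ q := by
  rcases max_choice x y with h | h <;> rw [h] <;>
    linarith [rpow_nonneg hx q, rpow_nonneg hy q]

end Real

noncomputable def signedRpow (x q : ℝ) : ℝ := x * |x| ^ (q - 1)

lemma signedRpow_of_nonneg {q : ℝ} (hq : q ≠ 0) {x : ℝ} (hx : 0 ≤ x) :
    signedRpow x q = |x| ^ q := by
  rw [signedRpow, ← abs_of_nonneg hx, abs_abs, ← rpow_one_add' (abs_nonneg _) (by simpa),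
    add_sub_cancel]

lemma signedRpow_of_nonpos {q : ℝ} (hq : q ≠ 0) {x : ℝ} (hx : x ≤ 0) :
    signedRpow x q = -|x| ^ q := by
  have h := signedRpow_of_nonneg hq (neg_nonneg.2 hx)
  rw [signedRpow, abs_neg] at h
  rw [signedRpow]
  linarith

-- `a` and `b` either have the same sign or lie on opposite sides of `0`.
lemma abs_signedRpow_sub_eq {q : ℝ} (hq : q ≠ 0) (a b : ℝ) :
    (|signedRpow a q - signedRpow b q| = |(|a| ^ q - |b| ^ q)| ∧ |a - b| = |(|a| - |b|)|) ∨
      (|signedRpow a q - signedRpow b q| = |a| ^ q + |b| ^ q ∧ |a - b| = |a| + |b|) := by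
  rcases le_total 0 a with ha | ha <;> rcases le_total 0 b with hb | hb
  · left
    rw [signedRpow_of_nonneg hq ha, signedRpow_of_nonneg hq hb, abs_of_nonneg ha,
      abs_of_nonneg hb]
    exact ⟨rfl, rfl⟩
  · right
    rw [signedRpow_of_nonneg hq ha, signedRpow_of_nonpos hq hb, sub_neg_eq_add,
      abs_of_nonneg (a := a - b) (by linarith), abs_of_nonneg ha, abs_of_nonpos hb]
    exact ⟨abs_of_nonneg (add_nonneg (rpow_nonneg ha q) (rpow_nonneg (neg_nonneg.2 hb) q)), by ring⟩
  · right
    rw [signedRpow_of_nonpos hq ha, signedRpow_of_nonneg hq hb, abs_sub_comm a,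
      abs_of_nonneg (a := b - a) (by linarith), abs_of_nonpos ha, abs_of_nonneg hb]
    have hsum : 0 ≤ (-a) ^ q + b ^ q :=
      add_nonneg (rpow_nonneg (neg_nonneg.2 ha) q) (rpow_nonneg hb q)
    exact ⟨by rw [abs_of_nonpos (by linarith)]; ring, by ring⟩
  · left
    rw [signedRpow_of_nonpos hq ha, signedRpow_of_nonpos hq hb, abs_of_nonpos ha,
      abs_of_nonpos hb, ← abs_neg, neg_sub_neg, ← abs_neg (-a - -b), neg_sub]
    exact ⟨rfl, by ring_nf⟩

lemma abs_signedRpow_sub_le_of_le_one {q : ℝ} (hq0 : 0 < q) (hq1 : q ≤ 1) (a b : ℝ) :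
    |signedRpow a q - signedRpow b q| ≤ 2 * |a - b| ^ q := by
  rcases abs_signedRpow_sub_eq hq0.ne' a b with ⟨h, hab⟩ | ⟨h, hab⟩ <;> rw [h, hab]
  · have := abs_rpow_sub_rpow_le hq0.le hq1 (abs_nonneg a) (abs_nonneg b)
    linarith [rpow_nonneg (abs_nonneg (|a| - |b|)) q]
  · have ha : |a| ^ q ≤ (|a| + |b|) ^ q :=
      rpow_le_rpow (abs_nonneg a) (by linarith [abs_nonneg b]) hq0.le
    have hb : |b| ^ q ≤ (|a| + |b|) ^ q :=
      rpow_le_rpow (abs_nonneg b) (by linarith [abs_nonneg a]) hq0.le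
    linarith

lemma abs_signedRpow_sub_le_of_one_le {q : ℝ} (hq : 1 ≤ q) (a b : ℝ) :
    |signedRpow a q - signedRpow b q| ≤ q * max |a| |b| ^ (q - 1) * |a - b| := by
  rcases abs_signedRpow_sub_eq (by linarith) a b with ⟨h, hab⟩ | ⟨h, hab⟩ <;> rw [h, hab]
  · exact abs_rpow_sub_rpow_le_mul hq (abs_nonneg a) (abs_nonneg b)
  · have ha := rpow_le_mul_rpow_sub_one hq (abs_nonneg a) (le_max_left |a| |b|)
    have hb := rpow_le_mul_rpow_sub_one hq (abs_nonneg b) (le_max_right |a| |b|)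
    calc |a| ^ q + |b| ^ q ≤ 1 * max |a| |b| ^ (q - 1) * (|a| + |b|) := by linarith
      _ ≤ q * max |a| |b| ^ (q - 1) * (|a| + |b|) := by gcongr

section Summation

variable {ι : Type*}

lemma tsum_le_tsum_of_nonneg_of_le {f g : ι → ℝ} (hf : ∀ k, 0 ≤ f k) (hfg : ∀ k, f k ≤ g k)
    (hg : Summable g) : ∑' k, f k ≤ ∑' k, g k :=
  (hg.of_nonneg_of_le hf hfg).tsum_le_tsum hfg hg

lemma summable_abs_sub_rpow {p : ℝ} (hp : 0 < p) {c d : ι → ℝ}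
    (hc : Summable fun k => |c k| ^ p) (hd : Summable fun k => |d k| ^ p) :
    Summable fun k => |c k - d k| ^ p := by
  have hp' : 0 < (ENNReal.ofReal p).toReal := by rwa [ENNReal.toReal_ofReal hp.le]
  have hmem : ∀ f : ι → ℝ, Memℓp f (ENNReal.ofReal p) ↔ Summable fun k => |f k| ^ p := by
    intro f
    simp only [memℓp_gen_iff hp', ENNReal.toReal_ofReal hp.le, Real.norm_eq_abs]
  exact (hmem (c - d)).1 (((hmem c).2 hc).sub ((hmem d).2 hd))

lemma summable_and_tsum_sq_mul_rpow_le {p : ℝ} (hp : 2 < p) {x y : ι → ℝ} (hy : ∀ k, 0 ≤ y k)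
    (hx_sum : Summable fun k => |x k| ^ p) (hy_sum : Summable fun k => y k ^ p) :
    (Summable fun k => x k ^ 2 * y k ^ (p - 2)) ∧
      ∑' k, x k ^ 2 * y k ^ (p - 2) ≤
        (∑' k, |x k| ^ p) ^ (2 / p) * (∑' k, y k ^ p) ^ ((p - 2) / p) := by
  have hpq : (p / 2).HolderConjugate (p / (p - 2)) := by
    rw [holderConjugate_iff_eq_conjExponent (by linarith)]
    field_simp
  have hx_pow : ∀ k, (x k ^ 2) ^ (p / 2) = |x k| ^ p := fun k => by
    rw [← sq_abs, ← rpow_natCast, ← rpow_mul (abs_nonneg _)]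
    congr 1
    push_cast
    ring
  have hy_pow : ∀ k, (y k ^ (p - 2)) ^ (p / (p - 2)) = y k ^ p := fun k => by
    rw [← rpow_mul (hy k), mul_div_cancel₀ _ (by linarith)]
  have h := summable_and_inner_le_Lp_mul_Lq_tsum_of_nonneg hpq (fun k => sq_nonneg (x k))
    (fun k => rpow_nonneg (hy k) (p - 2)) (by simpa only [hx_pow] using hx_sum)
    (by simpa only [hy_pow] using hy_sum)
  simpa only [hx_pow, hy_pow, one_div_div] using h

end Summation

section MazurMap

variable {ι : Type*} {p : ℝ} {c d : ι → ℝ}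

lemma tsum_sq_signedRpow_sub_le_of_le_two (hp0 : 0 < p) (hp2 : p ≤ 2)
    (hcd : Summable fun k => |c k - d k| ^ p) :
    ∑' k, (signedRpow (c k) (p / 2) - signedRpow (d k) (p / 2)) ^ 2 ≤
      4 * ((∑' k, |c k - d k| ^ p) ^ (1 / p)) ^ p := by
  have hpt : ∀ k, (signedRpow (c k) (p / 2) - signedRpow (d k) (p / 2)) ^ 2 ≤
      4 * |c k - d k| ^ p := fun k => by
    have h := pow_le_pow_left₀ (abs_nonneg _)
      (abs_signedRpow_sub_le_of_le_one (q := p / 2) (by positivity) (by linarith) (c k) (d k)) 2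
    rwa [sq_abs, mul_pow, ← rpow_mul_natCast (abs_nonneg _), Nat.cast_ofNat,
      div_mul_cancel₀ _ two_ne_zero, show (2 : ℝ) ^ 2 = 4 by norm_num] at h
  rw [one_div, rpow_inv_rpow (tsum_nonneg fun k => by positivity) hp0.ne', ← tsum_mul_left]
  exact tsum_le_tsum_of_nonneg_of_le (fun k => sq_nonneg _) hpt (hcd.mul_left 4)

lemma tsum_sq_signedRpow_sub_le_of_two_lt (hp : 2 < p)
    (hc : Summable fun k => |c k| ^ p) (hc1 : ∑' k, |c k| ^ p = 1)
    (hd : Summable fun k => |d k| ^ p) (hd1 : ∑' k, |d k| ^ p = 1) :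
    ∑' k, (signedRpow (c k) (p / 2) - signedRpow (d k) (p / 2)) ^ 2 ≤
      p ^ 2 / 2 * ((∑' k, |c k - d k| ^ p) ^ (1 / p)) ^ 2 := by
  have hp0 : 0 < p := by linarith
  set M : ι → ℝ := fun k => max |c k| |d k|
  have hM0 : ∀ k, 0 ≤ M k := fun k => (abs_nonneg _).trans (le_max_left _ _)
  have hM_pow : ∀ k, M k ^ p ≤ |c k| ^ p + |d k| ^ p := fun k =>
    max_rpow_le_rpow_add_rpow (abs_nonneg (c k)) (abs_nonneg (d k))
  have hM_tsum : (∑' k, M k ^ p) ^ ((p - 2) / p) ≤ 2 :=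
    calc (∑' k, M k ^ p) ^ ((p - 2) / p) ≤ 2 ^ ((p - 2) / p) := by
          gcongr
          calc ∑' k, M k ^ p ≤ ∑' k, (|c k| ^ p + |d k| ^ p) :=
                tsum_le_tsum_of_nonneg_of_le (fun k => rpow_nonneg (hM0 k) p) hM_pow (hc.add hd)
            _ = 2 := by rw [hc.tsum_add hd, hc1, hd1]; norm_num
      _ ≤ 2 ^ (1 : ℝ) := rpow_le_rpow_of_exponent_le one_le_two (by rw [div_le_one hp0]; linarith)
      _ = 2 := rpow_one 2
  obtain ⟨h_sum, h_holder⟩ := summable_and_tsum_sq_mul_rpow_le hp hM0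
    (summable_abs_sub_rpow hp0 hc hd) ((hc.add hd).of_nonneg_of_le (fun k => by positivity) hM_pow)
  have hpt : ∀ k, (signedRpow (c k) (p / 2) - signedRpow (d k) (p / 2)) ^ 2 ≤
      (p / 2) ^ 2 * ((c k - d k) ^ 2 * M k ^ (p - 2)) := fun k => by
    have h := pow_le_pow_left₀ (abs_nonneg _)
      (abs_signedRpow_sub_le_of_one_le (q := p / 2) (by linarith) (c k) (d k)) 2
    rwa [sq_abs, mul_pow, mul_pow, sq_abs, ← rpow_mul_natCast (hM0 k), Nat.cast_ofNat,
      show (p / 2 - 1) * 2 = p - 2 by ring, mul_assoc, mul_comm (M k ^ _)] at h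
  calc ∑' k, (signedRpow (c k) (p / 2) - signedRpow (d k) (p / 2)) ^ 2
      ≤ ∑' k, (p / 2) ^ 2 * ((c k - d k) ^ 2 * M k ^ (p - 2)) :=
        tsum_le_tsum_of_nonneg_of_le (fun k => sq_nonneg _) hpt (h_sum.mul_left _)
    _ = (p / 2) ^ 2 * ∑' k, (c k - d k) ^ 2 * M k ^ (p - 2) := tsum_mul_left
    _ ≤ (p / 2) ^ 2 * ((∑' k, |c k - d k| ^ p) ^ (2 / p) * 2) := by
        gcongr
        exact h_holder.trans (by gcongr)
    _ = p ^ 2 / 2 * ((∑' k, |c k - d k| ^ p) ^ (1 / p)) ^ 2 := by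
        rw [← rpow_mul_natCast (tsum_nonneg fun k => by positivity)]
        ring_nf

end MazurMap

/-- The Mazur map `ψ(c)ₖ = cₖ·|cₖ|^(p/2−1)` is uniformly continuous from the
unit sphere of `ℓᵖ(ℕ)` (with the `ℓᵖ` metric) to `ℓ²(ℕ)`. -/
theorem mazur_map_uniformly_continuous (p : ℝ) (hp : 1 ≤ p) :
    ∀ ε : ℝ, 0 < ε → ∃ δ : ℝ, 0 < δ ∧ ∀ c d : ℕ → ℝ,
      Summable (fun k => |c k| ^ p) → (∑' k, |c k| ^ p) = 1 →
      Summable (fun k => |d k| ^ p) → (∑' k, |d k| ^ p) = 1 →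
      (∑' k, |c k - d k| ^ p) ^ (1 / p) < δ →
      (∑' k, (c k * |c k| ^ (p / 2 - 1) - d k * |d k| ^ (p / 2 - 1)) ^ 2)
        ^ ((1 : ℝ) / 2) < ε := by
  intro ε hε
  have hp0 : 0 < p := by linarith
  obtain ⟨C, r, hC, hr, hbound⟩ : ∃ C r : ℝ, 0 < C ∧ 0 < r ∧ ∀ c d : ℕ → ℝ,
      Summable (fun k => |c k| ^ p) → (∑' k, |c k| ^ p) = 1 →
      Summable (fun k => |d k| ^ p) → (∑' k, |d k| ^ p) = 1 →
      ∑' k, (signedRpow (c k) (p / 2) - signedRpow (d k) (p / 2)) ^ 2 ≤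
        C * ((∑' k, |c k - d k| ^ p) ^ (1 / p)) ^ r := by
    rcases le_or_gt p 2 with hp2 | hp2
    · exact ⟨4, p, by norm_num, hp0, fun c d hc _ hd _ =>
        tsum_sq_signedRpow_sub_le_of_le_two hp0 hp2 (summable_abs_sub_rpow hp0 hc hd)⟩
    · exact ⟨p ^ 2 / 2, 2, by positivity, two_pos, fun c d hc hc1 hd hd1 => by
        simpa only [rpow_two] using tsum_sq_signedRpow_sub_le_of_two_lt hp2 hc hc1 hd hd1⟩
  refine ⟨(ε ^ 2 / C) ^ r⁻¹, by positivity, fun c d hc hc1 hd hd1 hδ => ?_⟩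
  rw [lt_rpow_inv_iff_of_pos (by positivity) (by positivity) hr, lt_div_iff₀' hC] at hδ
  rw [one_div, rpow_inv_lt_iff_of_pos (tsum_nonneg fun k => sq_nonneg _) hε.le two_pos, rpow_two]
  exact (hbound c d hc hc1 hd hd1).trans_lt hδ
end

section
/- Let G be a group with a finite symmetric generating set S, and suppose the word metric space (G, d_S) is Gromov hyperbolic: there exists δ ≥ 0 such that for all x, y, z, w ∈ G, (x,z)_w ≥ min((x,y)_w, (y,z)_w) − δ, where (x,y)_w = ½(d_S(x,w) + d_S(y,w) − d_S(x,y)) is the Gromov product. Then (G, d_S) has finite asymptotic dimension: there exists n ∈ ℕ such that G has asymptotic dimension at most n. -/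
/-- The word metric associated to `S`. -/
noncomputable def wordDist {G : Type*} [Group G] (S : Set G) (g h : G) : ℝ :=
  (wordLength S (g⁻¹ * h) : ℝ)

section Aux
variable {G : Type*} [Group G] {S : Set G}

lemma exists_word (hSsymm : ∀ s ∈ S, s⁻¹ ∈ S) (hSgen : Subgroup.closure S = ⊤)
    (g : G) : ∃ w : List G, (∀ s ∈ w, s ∈ S) ∧ w.prod = g := by
  have hg : g ∈ Subgroup.closure S := hSgen ▸ Subgroup.mem_top g
  induction hg using Subgroup.closure_induction with
  | mem s hs => exact ⟨[s], by simpa using hs, by simp⟩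
  | one => exact ⟨[], by simp, by simp⟩
  | mul a b _ _ iha ihb =>
    obtain ⟨w1, h1, h1'⟩ := iha
    obtain ⟨w2, h2, h2'⟩ := ihb
    refine ⟨w1 ++ w2, ?_, by simp [h1', h2']⟩
    intro s hs
    rcases List.mem_append.1 hs with h | h
    exacts [h1 s h, h2 s h]
  | inv a _ iha =>
    obtain ⟨w, h, h'⟩ := iha
    refine ⟨(w.map fun x => x⁻¹).reverse, ?_, ?_⟩
    · intro s hs
      simp only [List.mem_reverse, List.mem_map] at hs
      obtain ⟨t, ht, rfl⟩ := hs
      exact hSsymm t (h t ht)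
    · rw [← List.prod_inv_reverse, h']

lemma wordLength_le {g : G} {w : List G} (hw : ∀ s ∈ w, s ∈ S) (hp : w.prod = g) :
    wordLength S g ≤ w.length :=
  Nat.sInf_le ⟨w, rfl, hw, hp⟩

lemma exists_geodesic_word (hSsymm : ∀ s ∈ S, s⁻¹ ∈ S)
    (hSgen : Subgroup.closure S = ⊤) (g : G) :
    ∃ w : List G, w.length = wordLength S g ∧ (∀ s ∈ w, s ∈ S) ∧ w.prod = g := by
  obtain ⟨w, hw, hp⟩ := exists_word hSsymm hSgen g
  have hne : {n : ℕ | ∃ w : List G, w.length = n ∧ (∀ s ∈ w, s ∈ S) ∧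
      w.prod = g}.Nonempty := ⟨w.length, w, rfl, hw, hp⟩
  exact Nat.sInf_mem hne

lemma wordLength_one : wordLength S (1 : G) = 0 :=
  Nat.le_zero.1 (wordLength_le (w := []) (by simp) (by simp))

lemma wordLength_mul_le (hSsymm : ∀ s ∈ S, s⁻¹ ∈ S)
    (hSgen : Subgroup.closure S = ⊤) (g h : G) :
    wordLength S (g * h) ≤ wordLength S g + wordLength S h := by
  obtain ⟨w1, hl1, hw1, hp1⟩ := exists_geodesic_word hSsymm hSgen g
  obtain ⟨w2, hl2, hw2, hp2⟩ := exists_geodesic_word hSsymm hSgen h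
  calc wordLength S (g * h) ≤ (w1 ++ w2).length := by
        refine wordLength_le ?_ (by simp [hp1, hp2])
        intro s hs; rcases List.mem_append.1 hs with h' | h'
        exacts [hw1 s h', hw2 s h']
    _ = wordLength S g + wordLength S h := by simp [hl1, hl2]

lemma wordLength_inv_le (hSsymm : ∀ s ∈ S, s⁻¹ ∈ S)
    (hSgen : Subgroup.closure S = ⊤) (g : G) :
    wordLength S g⁻¹ ≤ wordLength S g := by
  obtain ⟨w, hl, hw, hp⟩ := exists_geodesic_word hSsymm hSgen g
  calc wordLength S g⁻¹ ≤ ((w.map fun x => x⁻¹).reverse).length := by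
        refine wordLength_le ?_ (by rw [← List.prod_inv_reverse, hp])
        intro s hs
        simp only [List.mem_reverse, List.mem_map] at hs
        obtain ⟨t, ht, rfl⟩ := hs
        exact hSsymm t (hw t ht)
    _ = wordLength S g := by simp [hl]

lemma wordLength_inv (hSsymm : ∀ s ∈ S, s⁻¹ ∈ S)
    (hSgen : Subgroup.closure S = ⊤) (g : G) :
    wordLength S g⁻¹ = wordLength S g :=
  le_antisymm (wordLength_inv_le hSsymm hSgen g) (by
    simpa using wordLength_inv_le hSsymm hSgen g⁻¹)

/-- Prefix points along geodesic words. -/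
lemma exists_prefix (hSsymm : ∀ s ∈ S, s⁻¹ ∈ S)
    (hSgen : Subgroup.closure S = ⊤) (g : G) {D : ℕ} (hD : D ≤ wordLength S g) :
    ∃ p : G, wordLength S p = D ∧ wordLength S (p⁻¹ * g) = wordLength S g - D := by
  obtain ⟨w, hl, hw, hp⟩ := exists_geodesic_word hSsymm hSgen g
  refine ⟨(w.take D).prod, ?_, ?_⟩
  all_goals {
    have h1 : wordLength S (w.take D).prod ≤ D := by
      have := wordLength_le (g := (w.take D).prod) (w := w.take D)
        (fun s hs => hw s (List.mem_of_mem_take hs)) rfl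
      calc wordLength S (w.take D).prod ≤ (w.take D).length := this
        _ ≤ D := by simp [List.length_take]
    have h2 : wordLength S ((w.take D).prod⁻¹ * g) ≤ wordLength S g - D := by
      have hdrop : (w.take D).prod⁻¹ * g = (w.drop D).prod := by
        rw [← hp, ← List.prod_take_mul_prod_drop w D, inv_mul_cancel_left]
      rw [hdrop]
      have := wordLength_le (g := (w.drop D).prod) (w := w.drop D)
        (fun s hs => hw s (List.mem_of_mem_drop hs)) rfl
      calc wordLength S (w.drop D).prod ≤ (w.drop D).length := this
        _ = wordLength S g - D := by rw [List.length_drop, hl]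
    have h3 : wordLength S g ≤
        wordLength S (w.take D).prod + wordLength S ((w.take D).prod⁻¹ * g) := by
      have := wordLength_mul_le hSsymm hSgen (w.take D).prod ((w.take D).prod⁻¹ * g)
      simpa using this
    omega }


/-- Balls in the word metric are finite. -/
lemma ball_finite (hSfin : S.Finite) (hSsymm : ∀ s ∈ S, s⁻¹ ∈ S)
    (hSgen : Subgroup.closure S = ⊤) (C : ℕ) :
    {g : G | wordLength S g ≤ C}.Finite := by
  induction C with
  | zero =>
    apply Set.Finite.subset (Set.finite_singleton (1 : G))
    intro g hg
    simp only [Set.mem_setOf_eq, Nat.le_zero] at hg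
    obtain ⟨w, hl, -, hp⟩ := exists_geodesic_word hSsymm hSgen g
    have : w = [] := List.length_eq_zero_iff.1 (by rw [hl, hg])
    rw [this] at hp
    simp only [List.prod_nil] at hp
    simp [← hp]
  | succ C ih =>
    have hsub : {g : G | wordLength S g ≤ C + 1} ⊆
        {g : G | wordLength S g ≤ C} ∪
          ⋃ s ∈ S, (fun h => h * s) '' {g : G | wordLength S g ≤ C} := by
      intro g hg
      simp only [Set.mem_setOf_eq] at hg
      obtain ⟨w, hl, hw, hp⟩ := exists_geodesic_word hSsymm hSgen g
      rcases List.eq_nil_or_concat w with rfl | ⟨w', s, rfl⟩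
      · left
        simp only [Set.mem_setOf_eq]
        simp only [List.prod_nil] at hp
        rw [← hp, wordLength_one]
        exact Nat.zero_le _
      · right
        have hs : s ∈ S := hw s (by simp)
        have hw' : wordLength S w'.prod ≤ C := by
          have h1 := wordLength_le (g := w'.prod) (w := w')
            (fun t ht => hw t (by simp [ht])) rfl
          have hlen : w'.length + 1 = wordLength S g := by simpa using hl
          omega
        refine Set.mem_biUnion hs ⟨w'.prod, hw', ?_⟩
        simp [← hp]
    exact Set.Finite.subset
      (ih.union (Set.Finite.biUnion hSfin fun s _ => ih.image _)) hsub

end Aux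

/-- A Gromov hyperbolic group (with respect to a finite symmetric generating
set) has finite asymptotic dimension. -/
theorem finite_asdim_of_hyperbolic
    (G : Type*) [Group G] (S : Set G)
    (hSfin : S.Finite) (hSsymm : ∀ s ∈ S, s⁻¹ ∈ S)
    (hSgen : Subgroup.closure S = ⊤)
    (δ : ℝ) (hδ : 0 ≤ δ)
    (hhyp : ∀ x y z w : G,
      (wordDist S x w + wordDist S z w - wordDist S x z) / 2 ≥
        min ((wordDist S x w + wordDist S y w - wordDist S x y) / 2)
            ((wordDist S y w + wordDist S z w - wordDist S y z) / 2) - δ) :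
    ∃ n : ℕ, AsdimLE (wordDist S) n := by
  classical
  -- basic metric facts
  have hd1 : ∀ g : G, wordDist S g 1 = (wordLength S g : ℝ) := by
    intro g
    show ((wordLength S (g⁻¹ * 1) : ℝ)) = _
    rw [mul_one, wordLength_inv hSsymm hSgen]
  have hd1' : ∀ g : G, wordDist S 1 g = (wordLength S g : ℝ) := by
    intro g
    show ((wordLength S ((1 : G)⁻¹ * g) : ℝ)) = _
    rw [inv_one, one_mul]
  have hdsymm : ∀ g h : G, wordDist S g h = wordDist S h g := by
    intro g h
    show ((wordLength S (g⁻¹ * h) : ℝ)) = (wordLength S (h⁻¹ * g) : ℝ)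
    rw [← wordLength_inv hSsymm hSgen (g⁻¹ * h)]
    simp [mul_inv_rev]
  have hdtri : ∀ g h k : G, wordDist S g k ≤ wordDist S g h + wordDist S h k := by
    intro g h k
    show ((wordLength S (g⁻¹ * k) : ℝ)) ≤
      (wordLength S (g⁻¹ * h) : ℝ) + (wordLength S (h⁻¹ * k) : ℝ)
    have : g⁻¹ * k = (g⁻¹ * h) * (h⁻¹ * k) := by group
    rw [this]
    exact_mod_cast wordLength_mul_le hSsymm hSgen _ _
  -- prefix stability
  have key : ∀ (p y p' y' : G) (Dv : ℕ),
      wordLength S p = Dv → wordLength S (p⁻¹ * y) = wordLength S y - Dv →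
      Dv ≤ wordLength S y →
      wordLength S p' = Dv → wordLength S (p'⁻¹ * y') = wordLength S y' - Dv →
      Dv ≤ wordLength S y' →
      (Dv : ℝ) ≤ ((wordLength S y : ℝ) + (wordLength S y' : ℝ)
        - wordDist S y y') / 2 →
      wordDist S p p' ≤ 4 * δ := by
    intro p y p' y' Dv hp1 hp2 hyD hp1' hp2' hyD' hprod
    have e1 : wordDist S p 1 = (Dv : ℝ) := by rw [hd1, hp1]
    have e2 : wordDist S y 1 = (wordLength S y : ℝ) := hd1 y
    have e3 : wordDist S p' 1 = (Dv : ℝ) := by rw [hd1, hp1']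
    have e4 : wordDist S y' 1 = (wordLength S y' : ℝ) := hd1 y'
    have e5 : wordDist S p y = (wordLength S y : ℝ) - Dv := by
      show ((wordLength S (p⁻¹ * y) : ℝ)) = _
      rw [hp2, Nat.cast_sub hyD]
    have e6 : wordDist S y' p' = (wordLength S y' : ℝ) - Dv := by
      rw [hdsymm]
      show ((wordLength S (p'⁻¹ * y') : ℝ)) = _
      rw [hp2', Nat.cast_sub hyD']
    have h1 := hhyp p y p' 1
    have h2 := hhyp y y' p' 1
    have hA : (wordDist S p 1 + wordDist S y 1 - wordDist S p y) / 2 = (Dv : ℝ) := by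
      rw [e1, e2, e5]; ring
    have hC : (wordDist S y' 1 + wordDist S p' 1 - wordDist S y' p') / 2
        = (Dv : ℝ) := by
      rw [e4, e3, e6]; ring
    have hBmid : (wordDist S y 1 + wordDist S y' 1 - wordDist S y y') / 2
        ≥ (Dv : ℝ) := by rw [e2, e4]; exact hprod
    have hmid : (wordDist S y 1 + wordDist S p' 1 - wordDist S y p') / 2
        ≥ (Dv : ℝ) - δ := by
      refine le_trans ?_ h2
      have : min ((wordDist S y 1 + wordDist S y' 1 - wordDist S y y') / 2)
          ((wordDist S y' 1 + wordDist S p' 1 - wordDist S y' p') / 2)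
          ≥ (Dv : ℝ) := le_min hBmid (le_of_eq hC.symm)
      linarith
    have hfinal : (wordDist S p 1 + wordDist S p' 1 - wordDist S p p') / 2
        ≥ (Dv : ℝ) - 2 * δ := by
      refine le_trans ?_ h1
      have : min ((wordDist S p 1 + wordDist S y 1 - wordDist S p y) / 2)
          ((wordDist S y 1 + wordDist S p' 1 - wordDist S y p') / 2)
          ≥ (Dv : ℝ) - δ := le_min (by rw [hA]; linarith) hmid
      linarith
    rw [e1, e3] at hfinal
    linarith
  -- the ball of radius 4δ
  set B0 : Set G := {h : G | (wordLength S h : ℝ) ≤ 4 * δ} with hB0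
  have hB0fin : B0.Finite := by
    refine Set.Finite.subset (ball_finite hSfin hSsymm hSgen ⌈4 * δ⌉₊) ?_
    intro h hh
    simp only [hB0, Set.mem_setOf_eq] at hh ⊢
    exact_mod_cast le_trans hh (Nat.le_ceil _)
  have hB0ne : B0.Nonempty := ⟨1, by simp [hB0, wordLength_one]; positivity⟩
  set N : ℕ := B0.ncard with hN
  have hN1 : 1 ≤ N := (Set.ncard_pos hB0fin).mpr hB0ne
  -- choice of prefix points
  have hPex : ∀ q : G × ℕ, ∃ p : G, q.2 ≤ wordLength S q.1 →
      wordLength S p = q.2 ∧ wordLength S (p⁻¹ * q.1) = wordLength S q.1 - q.2 := by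
    intro q
    by_cases h : q.2 ≤ wordLength S q.1
    · obtain ⟨p, h1, h2⟩ := exists_prefix hSsymm hSgen q.1 h
      exact ⟨p, fun _ => ⟨h1, h2⟩⟩
    · exact ⟨1, fun h' => absurd h' h⟩
  choose P hP using hPex
  refine ⟨2 * N - 1, ?_⟩
  intro r hr
  set E : ℕ := ⌈r⌉₊ + 1 with hE
  set R : ℕ := 2 * E with hR
  have hRpos : 0 < R := by positivity
  have hrE : r ≤ (E : ℝ) := le_trans (Nat.le_ceil r) (by exact_mod_cast Nat.le_succ _)
  set Dp : ℕ → ℕ := fun k => k * R - E with hDp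
  set U : ℕ → G → Set G := fun k g =>
    {y : G | wordLength S y / R = k ∧ P (y, Dp k) = g} with hU
  have hDle : ∀ y : G, ∀ k : ℕ, wordLength S y / R = k → Dp k ≤ wordLength S y := by
    intro y k hk
    calc Dp k ≤ k * R := Nat.sub_le _ _
      _ = wordLength S y / R * R := by rw [hk]
      _ ≤ wordLength S y := Nat.div_mul_le_self _ _
  have hAnn : ∀ y : G, ∀ k : ℕ, wordLength S y / R = k →
      k * R ≤ wordLength S y ∧ wordLength S y < k * R + R := by
    intro y k hk
    have h1 : k * R + wordLength S y % R = wordLength S y := by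
      rw [← hk, mul_comm]; exact Nat.div_add_mod _ _
    have h2 : wordLength S y % R < R := Nat.mod_lt _ hRpos
    omega
  -- membership facts
  have hUmem : ∀ (k : ℕ) (g y : G), y ∈ U k g →
      wordLength S (P (y, Dp k)) = Dp k ∧
      wordLength S ((P (y, Dp k))⁻¹ * y) = wordLength S y - Dp k ∧
      P (y, Dp k) = g ∧ wordLength S y / R = k := by
    intro k g y hy
    obtain ⟨hy1, hy2⟩ := hy
    obtain ⟨h1, h2⟩ := hP (y, Dp k) (hDle y k hy1)
    exact ⟨h1, h2, hy2, hy1⟩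
  refine ⟨Set.range (fun p : ℕ × G => U p.1 p.2), ?_, ?_, ?_⟩
  · -- covering
    intro x
    exact ⟨U (wordLength S x / R) (P (x, Dp (wordLength S x / R))),
      ⟨(wordLength S x / R, P (x, Dp (wordLength S x / R))), rfl⟩, rfl, rfl⟩
  · -- uniformly bounded
    refine ⟨2 * ((R : ℝ) + E), ?_⟩
    rintro V ⟨⟨k, g⟩, rfl⟩ y hy z hz
    obtain ⟨hy1, hy2, hy3, hy4⟩ := hUmem k g y hy
    obtain ⟨hz1, hz2, hz3, hz4⟩ := hUmem k g z hz
    have hyr : wordLength S (g⁻¹ * y) ≤ R + E := by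
      rw [← hy3, hy2]
      have := hAnn y k hy4
      simp only [hDp]
      omega
    have hzr : wordLength S (g⁻¹ * z) ≤ R + E := by
      rw [← hz3, hz2]
      have := hAnn z k hz4
      simp only [hDp]
      omega
    calc wordDist S y z ≤ wordDist S y g + wordDist S g z := hdtri y g z
      _ = (wordLength S (g⁻¹ * y) : ℝ) + (wordLength S (g⁻¹ * z) : ℝ) := by
          rw [hdsymm y g]; rfl
      _ ≤ ((R : ℝ) + E) + ((R : ℝ) + E) := by
          have h1 : (wordLength S (g⁻¹ * y) : ℝ) ≤ (R : ℝ) + E := by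
            exact_mod_cast hyr
          have h2 : (wordLength S (g⁻¹ * z) : ℝ) ≤ (R : ℝ) + E := by
            exact_mod_cast hzr
          linarith
      _ = 2 * ((R : ℝ) + E) := by ring
  · -- multiplicity
    intro x
    set a : ℕ := wordLength S x with ha
    set k0 : ℕ := (a - E) / R with hk0
    have hkra : ∀ (k : ℕ) (g y : G), y ∈ U k g → wordDist S x y ≤ r →
        k = k0 ∨ k = k0 + 1 := by
      intro k g y hy hdxy
      obtain ⟨-, -, -, hy4⟩ := hUmem k g y hy
      have hxyE : wordLength S (x⁻¹ * y) ≤ E := by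
        have h1 : (wordLength S (x⁻¹ * y) : ℝ) ≤ (E : ℝ) := le_trans hdxy hrE
        exact_mod_cast h1
      have t1 : wordLength S y ≤ a + E := by
        have h := wordLength_mul_le hSsymm hSgen x (x⁻¹ * y)
        rw [mul_inv_cancel_left] at h
        omega
      have t2 : a ≤ wordLength S y + E := by
        have h := wordLength_mul_le hSsymm hSgen y (y⁻¹ * x)
        rw [mul_inv_cancel_left] at h
        have hinv : wordLength S (y⁻¹ * x) = wordLength S (x⁻¹ * y) := by
          rw [← wordLength_inv hSsymm hSgen (x⁻¹ * y)]
          simp [mul_inv_rev]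
        omega
      have hklo : k0 ≤ k := by
        rw [hk0, ← hy4]
        exact Nat.div_le_div_right (by omega)
      have hkhi : k ≤ k0 + 1 := by
        rw [← hy4, hk0]
        calc wordLength S y / R ≤ (a - E + R) / R :=
              Nat.div_le_div_right (by omega)
          _ = (a - E) / R + 1 := Nat.add_div_right _ hRpos
      omega
    set Vk : ℕ → Set G := fun k => {g : G | ∃ y ∈ U k g, wordDist S x y ≤ r}
      with hVk
    have hVfin : ∀ k : ℕ, (Vk k).Finite ∧ (Vk k).ncard ≤ N := by
      intro k
      rcases Set.eq_empty_or_nonempty (Vk k) with he | ⟨g₀, hg₀⟩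
      · constructor
        · rw [he]; exact Set.finite_empty
        · rw [he]; simp
      · obtain ⟨y₀, hy₀U, hy₀d⟩ := hg₀
        have hsub : Vk k ⊆ (fun h => g₀ * h) '' B0 := by
          intro g hg
          obtain ⟨y, hyU, hyd⟩ := hg
          obtain ⟨hq1, hq2, hq3, hq4⟩ := hUmem k g₀ y₀ hy₀U
          obtain ⟨hp1, hp2, hp3, hp4⟩ := hUmem k g y hyU
          have hDy₀ := hDle y₀ k hq4
          have hDy := hDle y k hp4
          have hdyy : wordDist S y₀ y ≤ 2 * r := by
            calc wordDist S y₀ y ≤ wordDist S y₀ x + wordDist S x y := hdtri _ _ _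
              _ ≤ r + r := add_le_add (by rw [hdsymm]; exact hy₀d) hyd
              _ = 2 * r := by ring
          have hprod : (Dp k : ℝ) ≤ ((wordLength S y₀ : ℝ) + (wordLength S y : ℝ)
              - wordDist S y₀ y) / 2 := by
            rcases Nat.eq_zero_or_pos k with rfl | hkpos
            · have hD0 : Dp 0 = 0 := by simp [hDp]
              rw [hD0]
              have h1 : wordDist S y₀ y ≤ (wordLength S y₀ : ℝ) + wordLength S y := by
                calc wordDist S y₀ y ≤ wordDist S y₀ 1 + wordDist S 1 y :=
                      hdtri _ _ _
                  _ = (wordLength S y₀ : ℝ) + wordLength S y := by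
                      rw [hd1, hd1']
              push_cast
              linarith
            · have hER : E ≤ k * R := by
                have : R ≤ k * R := by
                  calc R = 1 * R := (one_mul R).symm
                    _ ≤ k * R := Nat.mul_le_mul_right _ hkpos
                omega
              have hDkr : (Dp k : ℝ) = (k : ℝ) * R - E := by
                simp only [hDp]
                push_cast [Nat.cast_sub hER]
                ring
              have hy₀lo : (k : ℝ) * R ≤ wordLength S y₀ := by
                exact_mod_cast (hAnn y₀ k hq4).1
              have hylo : (k : ℝ) * R ≤ wordLength S y := by
                exact_mod_cast (hAnn y k hp4).1
              rw [hDkr]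
              linarith
          have hg₀1 : wordLength S g₀ = Dp k := by rw [← hq3]; exact hq1
          have hg₀2 : wordLength S (g₀⁻¹ * y₀) = wordLength S y₀ - Dp k := by
            rw [← hq3]; exact hq2
          have hg1 : wordLength S g = Dp k := by rw [← hp3]; exact hp1
          have hg2 : wordLength S (g⁻¹ * y) = wordLength S y - Dp k := by
            rw [← hp3]; exact hp2
          have hkey := key g₀ y₀ g y (Dp k) hg₀1 hg₀2 hDy₀ hg1 hg2 hDy hprod
          exact ⟨g₀⁻¹ * g, hkey, by simp⟩
        refine ⟨(hB0fin.image _).subset hsub, ?_⟩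
        calc (Vk k).ncard ≤ ((fun h => g₀ * h) '' B0).ncard :=
              Set.ncard_le_ncard hsub (hB0fin.image _)
          _ = N := Set.ncard_image_of_injective _ (mul_right_injective g₀)
    have hinjc : ∀ c : ℕ, Function.Injective (fun g : G => (c, g)) :=
      fun c g g' h => congrArg Prod.snd h
    set W : Set (ℕ × G) := (fun g => (k0, g)) '' Vk k0 ∪
        (fun g => (k0 + 1, g)) '' Vk (k0 + 1) with hW
    have hWfin : W.Finite :=
      ((hVfin k0).1.image _).union ((hVfin (k0 + 1)).1.image _)
    have hWcard : W.ncard ≤ 2 * N := by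
      calc W.ncard ≤ ((fun g => (k0, g)) '' Vk k0).ncard
            + ((fun g => (k0 + 1, g)) '' Vk (k0 + 1)).ncard :=
            Set.ncard_union_le _ _
        _ = (Vk k0).ncard + (Vk (k0 + 1)).ncard := by
            rw [Set.ncard_image_of_injective _ (hinjc k0),
              Set.ncard_image_of_injective _ (hinjc (k0 + 1))]
        _ ≤ N + N := add_le_add (hVfin k0).2 (hVfin (k0 + 1)).2
        _ = 2 * N := by ring
    have hTsub : {U' | U' ∈ Set.range (fun p : ℕ × G => U p.1 p.2) ∧
        ∃ y ∈ U', wordDist S x y ≤ r} ⊆ (fun p : ℕ × G => U p.1 p.2) '' W := by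
      rintro V ⟨⟨⟨k, g⟩, rfl⟩, y, hy, hdy⟩
      have hkk := hkra k g y hy hdy
      have hgV : g ∈ Vk k := ⟨y, hy, hdy⟩
      rcases hkk with h | h
      · subst h
        exact ⟨(k0, g), Or.inl ⟨g, hgV, rfl⟩, rfl⟩
      · subst h
        exact ⟨(k0 + 1, g), Or.inr ⟨g, hgV, rfl⟩, rfl⟩
    refine ⟨(hWfin.image _).subset hTsub, ?_⟩
    calc {U' | U' ∈ Set.range (fun p : ℕ × G => U p.1 p.2) ∧
          ∃ y ∈ U', wordDist S x y ≤ r}.ncard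
        ≤ ((fun p : ℕ × G => U p.1 p.2) '' W).ncard :=
          Set.ncard_le_ncard hTsub (hWfin.image _)
      _ ≤ W.ncard := Set.ncard_image_le hWfin
      _ ≤ 2 * N := hWcard
      _ ≤ 2 * N - 1 + 1 := by omega
end
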